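/- arXiv:math/0611228 — 3 statements merged into one kernel-verified Lean document; each statement's English description precedes it below -/
import Mathlib

section
/- For any α ∈ (0, 1/2), E[ sup_{N≥1} S_N ] ≤ 1/α. -/
open MeasureTheory ProbabilityTheory Finset Real
open scoped ENNReal NNReal

noncomputable section

/-- `U(α) = -1 - log(1 - 2α)/(2α)`. -/
def Ufun (α : ℝ) : ℝ := -1 - Real.log (1 - 2 * α) / (2 * α)

/-- `S_N = ∑_{i=1}^N b_i² (ξ_i² - 1) - U(α) ∑_{i=1}^N b_i⁴`. -/
def Sproc {Ω : Type*} (b : ℕ → ℝ) (ξ : ℕ → Ω → ℝ) (α : ℝ) (N : ℕ) (ω : Ω) : ℝ :=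
  ∑ i ∈ Finset.Icc 1 N, b i ^ 2 * (ξ i ω ^ 2 - 1) - Ufun α * ∑ i ∈ Finset.Icc 1 N, b i ^ 4

set_option linter.unusedSectionVars false
set_option linter.unusedVariables false


def psiF (t : ℝ) : ℝ := -t - Real.log (1 - 2 * t) / 2

lemma psiF_zero : psiF 0 = 0 := by simp [psiF]

lemma hasDerivAt_psiF {t : ℝ} (ht : t < 1/2) :
    HasDerivAt psiF (-1 + (1 - 2*t)⁻¹) t := by
  have h0 : (0:ℝ) < 1 - 2*t := by linarith
  have h1 : HasDerivAt (fun s : ℝ => 1 - 2*s) (-2) t := by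
    simpa using ((hasDerivAt_id t).const_mul (2:ℝ)).const_sub 1
  have h2 : HasDerivAt (fun s : ℝ => Real.log (1 - 2*s)) (-2 / (1 - 2*t)) t :=
    h1.log h0.ne'
  have h3 : HasDerivAt psiF (-1 - (-2 / (1 - 2*t)) / 2) t := by
    exact ((hasDerivAt_id' t).neg.sub (h2.div_const 2))
  convert h3 using 1
  field_simp
  ring

/-- Helper: if `f` has nonnegative derivative on `[a,b]` then `f a ≤ f b`. -/
lemma le_of_deriv_nonneg {f f' : ℝ → ℝ} {a b : ℝ} (hab : a ≤ b)
    (hderiv : ∀ x ∈ Set.Icc a b, HasDerivAt f (f' x) x)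
    (hpos : ∀ x ∈ Set.Ioo a b, 0 ≤ f' x) : f a ≤ f b := by
  have key : MonotoneOn f (Set.Icc a b) := by
    apply monotoneOn_of_deriv_nonneg (convex_Icc a b)
    · exact fun x hx => (hderiv x hx).continuousAt.continuousWithinAt
    · intro x hx
      rw [interior_Icc] at hx
      exact (hderiv x (Set.Ioo_subset_Icc_self hx)).differentiableAt.differentiableWithinAt
    · intro x hx
      rw [interior_Icc] at hx
      rw [(hderiv x (Set.Ioo_subset_Icc_self hx)).deriv]
      exact hpos x hx
  exact key ⟨le_rfl, hab⟩ ⟨hab, le_rfl⟩ hab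

lemma psiF_nonneg {t : ℝ} (h0 : 0 ≤ t) (h1 : t < 1/2) : 0 ≤ psiF t := by
  have := le_of_deriv_nonneg (f := psiF) (f' := fun x => -1 + (1 - 2*x)⁻¹) h0
    (fun x hx => hasDerivAt_psiF (lt_of_le_of_lt hx.2 h1))
    (fun x hx => by
      have hp : (0:ℝ) < 1 - 2*x := by
        have := hx.2; linarith
      show (0:ℝ) ≤ -1 + (1 - 2*x)⁻¹
      rw [← sub_nonneg]
      have : -1 + (1 - 2*x)⁻¹ - 0 = 2*x / (1 - 2*x) := by field_simp; ring
      rw [this]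
      exact div_nonneg (by linarith [hx.1]) hp.le)
  simpa [psiF_zero] using this

lemma psiF_mul_le_sq {α : ℝ} (h0 : 0 ≤ α) (h1 : α < 1/2) : (1 - 2*α) * psiF α ≤ α^2 := by
  have := le_of_deriv_nonneg (f := fun x => x^2 - (1 - 2*x) * psiF x)
    (f' := fun x => 2 * psiF x) h0
    (fun x hx => by
      have hx2 : x < 1/2 := lt_of_le_of_lt hx.2 h1
      have hp : (0:ℝ) < 1 - 2*x := by linarith
      have hd1 : HasDerivAt (fun s : ℝ => 1 - 2*s) (-2) x := by
        simpa using ((hasDerivAt_id x).const_mul (2:ℝ)).const_sub 1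
      have hd := ((hasDerivAt_pow 2 x).sub (hd1.mul (hasDerivAt_psiF hx2)))
      refine hd.congr_deriv ?_
      have hps : psiF x = -x - Real.log (1 - 2*x)/2 := rfl
      rw [mul_add, mul_inv_cancel₀ hp.ne']; push_cast; ring)
    (fun x hx => by
      have hψ : 0 ≤ psiF x := psiF_nonneg hx.1.le (by linarith [hx.2])
      show (0:ℝ) ≤ 2 * psiF x
      linarith)
  simpa [psiF_zero] using this

lemma psiF_main {α c : ℝ} (hα : α ∈ Set.Ioo (0:ℝ) (1/2)) (hc : c ∈ Set.Icc (0:ℝ) 1) :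
    psiF (α * c) ≤ c^2 * psiF α := by
  obtain ⟨hα0, hα1⟩ := hα
  obtain ⟨hc0, hc1⟩ := hc
  have hψ : 0 ≤ psiF α := psiF_nonneg hα0.le hα1
  have hdpsi : ∀ x ∈ Set.Icc (0:ℝ) 1, HasDerivAt (fun s => psiF (α * s))
      ((-1 + (1 - 2*(α*x))⁻¹) * α) x := by
    intro x hx
    have hαx : α * x < 1/2 := by nlinarith [hx.1, hx.2]
    have hinner : HasDerivAt (fun s : ℝ => α * s) α x := by
      simpa using (hasDerivAt_id x).const_mul α
    have := (hasDerivAt_psiF hαx).comp x hinner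
    exact this
  rcases le_total (α^2) ((1 - 2*α*c) * psiF α) with hcase | hcase
  · -- G monotone on [0, c]
    have := le_of_deriv_nonneg (f := fun x => x^2 * psiF α - psiF (α * x))
      (f' := fun x => 2 * x * psiF α - (-1 + (1 - 2*(α*x))⁻¹) * α) hc0
      (fun x hx => by
        have hx' : x ∈ Set.Icc (0:ℝ) 1 := ⟨hx.1, le_trans hx.2 hc1⟩
        have := ((hasDerivAt_pow 2 x).mul_const (psiF α)).sub (hdpsi x hx')
        refine this.congr_deriv ?_
        push_cast; ring)
      (fun x hx => by
        have hx0 : (0:ℝ) ≤ x := hx.1.le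
        have hxc : x ≤ c := hx.2.le
        have hp : (0:ℝ) < 1 - 2*(α*x) := by nlinarith
        show (0:ℝ) ≤ 2 * x * psiF α - (-1 + (1 - 2*(α*x))⁻¹) * α
        rw [sub_nonneg]
        have heq : (-1 + (1 - 2*(α*x))⁻¹) * α = 2*α^2*x / (1 - 2*(α*x)) := by
          have hne : (1 - 2*(α*x)) ≠ 0 := hp.ne'
          rw [eq_div_iff hne]
          linear_combination α * inv_mul_cancel₀ hne
        rw [heq, div_le_iff₀ hp]
        have h1 : (1 - 2*α*c) * psiF α ≤ (1 - 2*(α*x)) * psiF α := by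
          nlinarith [mul_nonneg (mul_nonneg hα0.le (sub_nonneg.mpr hxc)) hψ]
        nlinarith)
    have this2 : (0:ℝ)^2 * psiF α - psiF (α * 0) ≤ c^2 * psiF α - psiF (α * c) := this
    have h0 : (0:ℝ)^2 * psiF α - psiF (α * 0) = 0 := by simp [psiF_zero]
    linarith
  · -- G antitone on [c, 1]
    have := le_of_deriv_nonneg (f := fun x => psiF (α * x) - x^2 * psiF α)
      (f' := fun x => (-1 + (1 - 2*(α*x))⁻¹) * α - 2 * x * psiF α) hc1
      (fun x hx => by
        have hx' : x ∈ Set.Icc (0:ℝ) 1 := ⟨le_trans hc0 hx.1, hx.2⟩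
        have := (hdpsi x hx').sub ((hasDerivAt_pow 2 x).mul_const (psiF α))
        refine this.congr_deriv ?_
        push_cast; ring)
      (fun x hx => by
        have hxc : c ≤ x := hx.1.le
        have hx1 : x ≤ 1 := hx.2.le
        have hx0 : (0:ℝ) ≤ x := le_trans hc0 hxc
        have hp : (0:ℝ) < 1 - 2*(α*x) := by nlinarith
        show (0:ℝ) ≤ (-1 + (1 - 2*(α*x))⁻¹) * α - 2 * x * psiF α
        rw [sub_nonneg]
        have heq : (-1 + (1 - 2*(α*x))⁻¹) * α = 2*α^2*x / (1 - 2*(α*x)) := by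
          have hne : (1 - 2*(α*x)) ≠ 0 := hp.ne'
          rw [eq_div_iff hne]
          linear_combination α * inv_mul_cancel₀ hne
        rw [heq, le_div_iff₀ hp]
        have h1 : (1 - 2*(α*x)) * psiF α ≤ (1 - 2*α*c) * psiF α := by
          nlinarith [mul_nonneg (mul_nonneg hα0.le (sub_nonneg.mpr hxc)) hψ]
        nlinarith)
    have this2 : psiF (α * c) - c^2 * psiF α ≤ psiF (α * 1) - (1:ℝ)^2 * psiF α := this
    have h1 : psiF (α * 1) - (1:ℝ)^2 * psiF α = 0 := by simp
    linarith

lemma gauss_pdf_smul {τ : ℝ} :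
    ∀ x : ℝ, (gaussianPDFReal 0 1 x).toNNReal • Real.exp (τ * x^2)
      = (Real.sqrt (2*π))⁻¹ * Real.exp (-(1/2 - τ) * x^2) := by
  intro x
  have hpdf : gaussianPDFReal 0 1 x = (Real.sqrt (2*π))⁻¹ * Real.exp (-x^2/2) := by
    simp [gaussianPDFReal]
  rw [NNReal.smul_def, Real.coe_toNNReal _ (gaussianPDFReal_nonneg 0 1 x), hpdf]
  rw [smul_eq_mul, mul_assoc, ← Real.exp_add]
  ring_nf

lemma gauss_withDensity : gaussianReal 0 1
    = MeasureTheory.Measure.withDensity volume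
        (fun x => ((gaussianPDFReal 0 1 x).toNNReal : ℝ≥0∞)) := by
  rw [gaussianReal_of_var_ne_zero 0 one_ne_zero]
  rfl

lemma gauss_integrable {τ : ℝ} (h1 : τ < 1/2) :
    Integrable (fun x => Real.exp (τ * x^2)) (gaussianReal 0 1) := by
  rw [gauss_withDensity]
  rw [integrable_withDensity_iff_integrable_smul
    ((measurable_gaussianPDFReal 0 1).real_toNNReal)]
  have : (fun x => (gaussianPDFReal 0 1 x).toNNReal • Real.exp (τ * x^2))
      = fun x => (Real.sqrt (2*π))⁻¹ * Real.exp (-(1/2 - τ) * x^2) := by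
    funext x; exact gauss_pdf_smul x
  rw [this]
  exact (integrable_exp_neg_mul_sq (by linarith)).const_mul _

lemma gauss_integral {τ : ℝ} (h1 : τ < 1/2) :
    ∫ x, Real.exp (τ * x^2) ∂(gaussianReal 0 1) = Real.sqrt (1 - 2*τ)⁻¹ := by
  rw [gauss_withDensity]
  rw [integral_withDensity_eq_integral_smul ((measurable_gaussianPDFReal 0 1).real_toNNReal)]
  have : (fun x => (gaussianPDFReal 0 1 x).toNNReal • Real.exp (τ * x^2))
      = fun x => (Real.sqrt (2*π))⁻¹ * Real.exp (-(1/2 - τ) * x^2) := by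
    funext x; exact gauss_pdf_smul x
  rw [this, integral_const_mul, integral_gaussian]
  have hb : (0:ℝ) < 1/2 - τ := by linarith
  rw [← Real.sqrt_inv, ← Real.sqrt_mul (by positivity)]
  congr 1
  have hπ := Real.pi_pos
  have h2 : π * 2 - π * τ * 4 ≠ 0 := by nlinarith
  have h3 : (1:ℝ) - τ * 2 ≠ 0 := by intro h; nlinarith
  have h4 : π * 2 - π * τ * 4 = (π * 2) * (1 - τ * 2) := by ring
  have h5 : (1:ℝ) - 2*τ ≠ 0 := by intro h; nlinarith
  field_simp
def gfun (b : ℕ → ℝ) (α : ℝ) (i : ℕ) (x : ℝ) : ℝ :=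
  Real.exp (α * (b i ^ 2 * (x ^ 2 - 1) - Ufun α * b i ^ 4))

lemma measurable_gfun (b : ℕ → ℝ) (α : ℝ) (i : ℕ) : Measurable (gfun b α i) := by
  unfold gfun; fun_prop

lemma gfun_pos (b : ℕ → ℝ) (α : ℝ) (i : ℕ) (x : ℝ) : 0 < gfun b α i x := Real.exp_pos _

lemma gfun_eq (b : ℕ → ℝ) (α : ℝ) (i : ℕ) (x : ℝ) :
    gfun b α i x = Real.exp (α * (- b i ^ 2 - Ufun α * b i ^ 4)) * Real.exp ((α * b i ^ 2) * x ^ 2) := by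
  rw [gfun, ← Real.exp_add]; ring_nf

/-! ### The product process and the stopped-process induction -/

def Mprod {Ω : Type*} (b : ℕ → ℝ) (ξ : ℕ → Ω → ℝ) (α : ℝ) (n : ℕ) (ω : Ω) : ℝ :=
  ∏ i ∈ Finset.Icc 1 n, gfun b α i (ξ i ω)

lemma Mprod_zero {Ω : Type*} (b : ℕ → ℝ) (ξ : ℕ → Ω → ℝ) (α : ℝ) (ω : Ω) :
    Mprod b ξ α 0 ω = 1 := by simp [Mprod]

lemma Mprod_succ {Ω : Type*} (b : ℕ → ℝ) (ξ : ℕ → Ω → ℝ) (α : ℝ) (n : ℕ) (ω : Ω) :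
    Mprod b ξ α (n+1) ω = Mprod b ξ α n ω * gfun b α (n+1) (ξ (n+1) ω) := by
  rw [Mprod, Mprod, Finset.prod_Icc_succ_top (Nat.one_le_iff_ne_zero.mpr (Nat.succ_ne_zero n))]

lemma Mprod_pos {Ω : Type*} (b : ℕ → ℝ) (ξ : ℕ → Ω → ℝ) (α : ℝ) (n : ℕ) (ω : Ω) :
    0 < Mprod b ξ α n ω := Finset.prod_pos fun i _ => gfun_pos b α i _

lemma Mprod_eq_exp {Ω : Type*} (b : ℕ → ℝ) (ξ : ℕ → Ω → ℝ) (α : ℝ) (n : ℕ) (ω : Ω) :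
    Mprod b ξ α n ω = Real.exp (α * Sproc b ξ α n ω) := by
  rw [Mprod]
  unfold gfun
  rw [← Real.exp_sum]
  congr 1
  rw [Sproc, mul_sub, Finset.mul_sum, Finset.mul_sum, Finset.mul_sum, ← Finset.sum_sub_distrib]
  exact Finset.sum_congr rfl (fun i _ => by ring)

lemma measurable_Mprod {Ω : Type*} [MeasurableSpace Ω] (b : ℕ → ℝ) {ξ : ℕ → Ω → ℝ}
    (hmeas : ∀ i, Measurable (ξ i)) (α : ℝ) (n : ℕ) : Measurable (Mprod b ξ α n) :=
  Finset.measurable_prod _ fun i _ => (measurable_gfun b α i).comp (hmeas i)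

/-- The first-hitting region `D n = {∀ k ≤ n, M_k < u}`. -/
def Dset {Ω : Type*} (b : ℕ → ℝ) (ξ : ℕ → Ω → ℝ) (α u : ℝ) (n : ℕ) : Set Ω :=
  {ω | ∀ k ≤ n, Mprod b ξ α k ω < u}

/-- `M_k` as a function of the coordinates in `Icc 1 n`. -/
def Mhat (b : ℕ → ℝ) (α : ℝ) (n k : ℕ) (v : (Finset.Icc 1 n : Finset ℕ) → ℝ) : ℝ :=
  ∏ i ∈ (Finset.Icc 1 n).attach, if i.1 ≤ k then gfun b α i.1 (v i) else 1

lemma measurable_Mhat (b : ℕ → ℝ) (α : ℝ) (n k : ℕ) : Measurable (Mhat b α n k) := by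
  apply Finset.measurable_prod
  intro i _
  by_cases h : i.1 ≤ k
  · simp only [h, if_true]
    exact (measurable_gfun b α i.1).comp (measurable_pi_apply i)
  · simp only [h, if_false]
    exact measurable_const

lemma Mhat_comp {Ω : Type*} (b : ℕ → ℝ) (ξ : ℕ → Ω → ℝ) (α : ℝ) {n k : ℕ} (hk : k ≤ n) (ω : Ω) :
    Mhat b α n k (fun i => ξ i.1 ω) = Mprod b ξ α k ω := by
  rw [Mhat, Finset.prod_attach _ (fun j => if j ≤ k then gfun b α j (ξ j ω) else 1)]
  rw [← Finset.prod_filter]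
  rw [Mprod]
  congr 1
  ext j
  simp only [Finset.mem_filter, Finset.mem_Icc]
  omega

def Dhat (b : ℕ → ℝ) (α u : ℝ) (n : ℕ) : Set ((Finset.Icc 1 n : Finset ℕ) → ℝ) :=
  {v | ∀ k ≤ n, Mhat b α n k v < u}

lemma measurable_Dhat (b : ℕ → ℝ) (α u : ℝ) (n : ℕ) : MeasurableSet (Dhat b α u n) := by
  have : Dhat b α u n = ⋂ k ∈ Set.Iic n, (Mhat b α n k) ⁻¹' (Set.Iio u) := by
    ext v; simp [Dhat, Set.mem_iInter]
  rw [this]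
  exact MeasurableSet.biInter (Set.to_countable _)
    (fun k _ => (measurable_Mhat b α n k) measurableSet_Iio)

lemma Dhat_comp {Ω : Type*} (b : ℕ → ℝ) (ξ : ℕ → Ω → ℝ) (α u : ℝ) (n : ℕ) (ω : Ω) :
    ((fun i : (Finset.Icc 1 n : Finset ℕ) => ξ i.1 ω) ∈ Dhat b α u n) ↔ ω ∈ Dset b ξ α u n := by
  unfold Dhat Dset
  simp only [Set.mem_setOf_eq]
  constructor
  · intro h k hk
    rw [← Mhat_comp b ξ α hk ω]; exact h k hk
  · intro h k hk
    rw [Mhat_comp b ξ α hk ω]; exact h k hk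
lemma Ufun_eq_psiF {α : ℝ} (hα : α ≠ 0) : α * Ufun α = psiF α := by
  rw [Ufun, psiF]
  field_simp

lemma sqrt_le_exp_key {α c : ℝ} (hα : α ∈ Set.Ioo (0:ℝ) (1/2)) (hc : c ∈ Set.Icc (0:ℝ) 1) :
    Real.sqrt (1 - 2*(α*c))⁻¹ ≤ Real.exp (α*c + c^2 * psiF α) := by
  have hp : (0:ℝ) < 1 - 2*(α*c) := by nlinarith [hα.1, hα.2, hc.1, hc.2]
  have hsp : 0 < Real.sqrt (1 - 2*(α*c))⁻¹ := Real.sqrt_pos.mpr (by positivity)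
  rw [← Real.log_le_iff_le_exp hsp]
  rw [Real.log_sqrt (by positivity), Real.log_inv]
  have key := psiF_main hα hc
  rw [psiF] at key
  linarith

lemma gfun_int_le {Ω : Type*} [MeasurableSpace Ω] (P : Measure Ω) [IsProbabilityMeasure P]
    {ξi : Ω → ℝ} (hmeas : Measurable ξi) (hGauss : Measure.map ξi P = gaussianReal 0 1)
    {b : ℕ → ℝ} (hb : ∀ i, b i ^ 2 ≤ 1) {α : ℝ} (hα : α ∈ Set.Ioo (0:ℝ) (1/2)) (i : ℕ) :
    Integrable (fun ω => gfun b α i (ξi ω)) P ∧ ∫ ω, gfun b α i (ξi ω) ∂P ≤ 1 := by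
  obtain ⟨hα0, hα1⟩ := hα
  set c := b i ^ 2 with hc
  have hc0 : 0 ≤ c := sq_nonneg _
  have hc1 : c ≤ 1 := hb i
  set τ := α * c with hτdef
  have hτ : τ < 1/2 := by nlinarith
  have hmf : Measurable (fun x : ℝ => Real.exp (τ * x^2)) := by fun_prop
  have h1 : Integrable (fun ω => Real.exp (τ * (ξi ω)^2)) P := by
    have h := gauss_integrable hτ
    rw [← hGauss] at h
    exact (integrable_map_measure hmf.aestronglyMeasurable hmeas.aemeasurable).mp h
  have h2 : ∫ ω, Real.exp (τ * (ξi ω)^2) ∂P = Real.sqrt (1 - 2*τ)⁻¹ := by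
    have h := gauss_integral hτ
    rw [← hGauss, integral_map hmeas.aemeasurable hmf.aestronglyMeasurable] at h
    exact h
  have hfuneq : (fun ω => gfun b α i (ξi ω))
      = fun ω => Real.exp (α * (- c - Ufun α * c^2)) * Real.exp (τ * (ξi ω)^2) := by
    funext ω
    rw [gfun_eq]
    have h4 : b i ^ 4 = c^2 := by rw [hc]; ring
    rw [h4]
  constructor
  · rw [hfuneq]; exact h1.const_mul _
  · rw [hfuneq, integral_const_mul, h2]
    have hkey := sqrt_le_exp_key ⟨hα0, hα1⟩ ⟨hc0, hc1⟩
    have hU : α * Ufun α = psiF α := Ufun_eq_psiF hα0.ne'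
    calc Real.exp (α * (-c - Ufun α * c^2)) * Real.sqrt (1 - 2*τ)⁻¹
        ≤ Real.exp (α * (-c - Ufun α * c^2)) * Real.exp (α*c + c^2 * psiF α) := by
          apply mul_le_mul_of_nonneg_left hkey (Real.exp_pos _).le
      _ = Real.exp (α * (-c - Ufun α * c^2) + (α*c + c^2 * psiF α)) := (Real.exp_add _ _).symm
      _ = Real.exp 0 := by
          congr 1
          have : α * (Ufun α * c^2) = psiF α * c^2 := by rw [← mul_assoc, hU]
          nlinarith [this]
      _ = 1 := Real.exp_zero


/-- The stopped process. -/
def Vproc {Ω : Type*} (b : ℕ → ℝ) (ξ : ℕ → Ω → ℝ) (α u : ℝ) : ℕ → Ω → ℝ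
  | 0 => fun _ => 1
  | (n+1) => fun ω => Vproc b ξ α u n ω
      + Set.indicator (Dset b ξ α u n) (Mprod b ξ α n) ω * (gfun b α (n+1) (ξ (n+1) ω) - 1)

section Ville

variable {Ω : Type*} [MeasurableSpace Ω] (P : Measure Ω) [IsProbabilityMeasure P]
  (b : ℕ → ℝ) (ξ : ℕ → Ω → ℝ) (α u : ℝ)

lemma indep_comp (hmeas : ∀ i, Measurable (ξ i))
    (hIndep : iIndepFun ξ P)
    (n : ℕ) {ζ : ((Finset.Icc 1 n : Finset ℕ) → ℝ) → ℝ} (hζ : Measurable ζ)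
    {η : ℝ → ℝ} (hη : Measurable η) :
    IndepFun (fun ω => ζ (fun i => ξ i.1 ω)) (fun ω => η (ξ (n+1) ω)) P := by
  have hd : Disjoint (Finset.Icc 1 n) ({n+1} : Finset ℕ) := by
    simp only [Finset.disjoint_singleton_right, Finset.mem_Icc]
    omega
  have h := hIndep.indepFun_finset (Finset.Icc 1 n) {n+1} hd hmeas
  exact h.comp hζ (hη.comp (measurable_pi_apply
    (⟨n+1, Finset.mem_singleton_self _⟩ : ({n+1} : Finset ℕ))))

lemma measurable_Dset (hmeas : ∀ i, Measurable (ξ i)) (n : ℕ) :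
    MeasurableSet (Dset b ξ α u n) := by
  have : Dset b ξ α u n = ⋂ k ∈ Set.Iic n, (Mprod b ξ α k) ⁻¹' (Set.Iio u) := by
    ext ω; simp [Dset, Set.mem_iInter]
  rw [this]
  exact MeasurableSet.biInter (Set.to_countable _)
    (fun k _ => (measurable_Mprod b hmeas α k) measurableSet_Iio)

variable (hmeas : ∀ i, Measurable (ξ i)) (hIndep : iIndepFun ξ P)
  (hGauss : ∀ i, Measure.map (ξ i) P = gaussianReal 0 1)
  (hb : ∀ i, b i ^ 2 ≤ 1) (hα : α ∈ Set.Ioo (0:ℝ) (1/2))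

include hmeas hIndep hGauss hb hα

lemma indepFun_Mprod (n : ℕ) {η : ℝ → ℝ} (hη : Measurable η) :
    IndepFun (Mprod b ξ α n) (fun ω => η (ξ (n+1) ω)) P := by
  have h := indep_comp P ξ hmeas hIndep n (measurable_Mhat b α n n) hη
  have hfe : (fun ω => Mhat b α n n (fun i => ξ i.1 ω)) = Mprod b ξ α n :=
    funext fun ω => Mhat_comp b ξ α le_rfl ω
  rwa [hfe] at h

lemma integrable_Mprod (n : ℕ) : Integrable (Mprod b ξ α n) P := by
  induction n with
  | zero =>
    have : Mprod b ξ α 0 = fun _ => 1 := funext (Mprod_zero b ξ α)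
    rw [this]; exact integrable_const 1
  | succ n ih =>
    have heq : Mprod b ξ α (n+1)
        = fun ω => Mprod b ξ α n ω * gfun b α (n+1) (ξ (n+1) ω) :=
      funext (Mprod_succ b ξ α n)
    rw [heq]
    exact (indepFun_Mprod P b ξ α hmeas hIndep hGauss hb hα n
        (measurable_gfun b α (n+1))).integrable_mul ih
      (gfun_int_le P (hmeas (n+1)) (hGauss (n+1)) hb hα (n+1)).1

lemma indepFun_Ind (n : ℕ) {η : ℝ → ℝ} (hη : Measurable η) :
    IndepFun ((Dset b ξ α u n).indicator (Mprod b ξ α n)) (fun ω => η (ξ (n+1) ω)) P := by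
  have h := indep_comp P ξ hmeas hIndep n
    ((measurable_Mhat b α n n).indicator (measurable_Dhat b α u n)) hη
  have hfe : (fun ω => (Dhat b α u n).indicator (Mhat b α n n) (fun i => ξ i.1 ω))
      = (Dset b ξ α u n).indicator (Mprod b ξ α n) := by
    funext ω
    by_cases hω : ω ∈ Dset b ξ α u n
    · rw [Set.indicator_of_mem ((Dhat_comp b ξ α u n ω).mpr hω),
        Set.indicator_of_mem hω, Mhat_comp b ξ α le_rfl]
    · rw [Set.indicator_of_notMem (fun hc => hω ((Dhat_comp b ξ α u n ω).mp hc)),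
        Set.indicator_of_notMem hω]
  rwa [hfe] at h

lemma integrable_Vproc (n : ℕ) :
    Integrable (Vproc b ξ α u n) P ∧ ∫ ω, Vproc b ξ α u n ω ∂P ≤ 1 := by
  induction n with
  | zero =>
    constructor
    · exact integrable_const 1
    · simp [Vproc]
  | succ n ih =>
    have hInd_int : Integrable ((Dset b ξ α u n).indicator (Mprod b ξ α n)) P :=
      (integrable_Mprod P b ξ α hmeas hIndep hGauss hb hα n).indicator
        (measurable_Dset b ξ α u hmeas n)
    have hg_int : Integrable (fun ω => gfun b α (n+1) (ξ (n+1) ω) - 1) P :=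
      ((gfun_int_le P (hmeas (n+1)) (hGauss (n+1)) hb hα (n+1)).1).sub (integrable_const 1)
    have hIF : IndepFun ((Dset b ξ α u n).indicator (Mprod b ξ α n))
        (fun ω => gfun b α (n+1) (ξ (n+1) ω) - 1) P :=
      indepFun_Ind P b ξ α u hmeas hIndep hGauss hb hα n
        ((measurable_gfun b α (n+1)).sub measurable_const)
    have hprod_int : Integrable (fun ω => (Dset b ξ α u n).indicator (Mprod b ξ α n) ω
        * (gfun b α (n+1) (ξ (n+1) ω) - 1)) P :=
      hIF.integrable_mul hInd_int hg_int
    have hVsucc : Vproc b ξ α u (n+1) = fun ω => Vproc b ξ α u n ω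
        + (Dset b ξ α u n).indicator (Mprod b ξ α n) ω * (gfun b α (n+1) (ξ (n+1) ω) - 1) := rfl
    constructor
    · rw [hVsucc]; exact ih.1.add hprod_int
    · rw [hVsucc]
      rw [integral_add ih.1 hprod_int]
      have hmul : ∫ ω, (Dset b ξ α u n).indicator (Mprod b ξ α n) ω
          * (gfun b α (n+1) (ξ (n+1) ω) - 1) ∂P
          = (∫ ω, (Dset b ξ α u n).indicator (Mprod b ξ α n) ω ∂P)
            * ∫ ω, (gfun b α (n+1) (ξ (n+1) ω) - 1) ∂P :=
        IndepFun.integral_fun_mul_eq_mul_integral hIF hInd_int.aestronglyMeasurable hg_int.aestronglyMeasurable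
      have h1 : 0 ≤ ∫ ω, (Dset b ξ α u n).indicator (Mprod b ξ α n) ω ∂P :=
        integral_nonneg fun ω => Set.indicator_nonneg
          (fun x _ => (Mprod_pos b ξ α n x).le) ω
      have h2 : ∫ ω, (gfun b α (n+1) (ξ (n+1) ω) - 1) ∂P ≤ 0 := by
        rw [integral_sub (gfun_int_le P (hmeas (n+1)) (hGauss (n+1)) hb hα (n+1)).1
          (integrable_const 1)]
        have := (gfun_int_le P (hmeas (n+1)) (hGauss (n+1)) hb hα (n+1)).2
        simp only [integral_const, measure_univ, probReal_univ, ENNReal.toReal_one, smul_eq_mul, one_mul]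
        linarith
      have : (∫ ω, (Dset b ξ α u n).indicator (Mprod b ξ α n) ω ∂P)
          * ∫ ω, (gfun b α (n+1) (ξ (n+1) ω) - 1) ∂P ≤ 0 := mul_nonpos_of_nonneg_of_nonpos h1 h2
      linarith [ih.2, hmul ▸ this]

omit hmeas hIndep hGauss hb hα in
lemma Vproc_pointwise (hu : 1 ≤ u) (n : ℕ) (ω : Ω) :
    (ω ∈ Dset b ξ α u n → Vproc b ξ α u n ω = Mprod b ξ α n ω) ∧
    (ω ∉ Dset b ξ α u n → u ≤ Vproc b ξ α u n ω) := by
  induction n with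
  | zero =>
    constructor
    · intro _; rw [Mprod_zero]; rfl
    · intro h
      simp only [Dset, Set.mem_setOf_eq, not_forall] at h
      obtain ⟨k, hk, hku⟩ := h
      interval_cases k
      rw [Mprod_zero] at hku
      push_neg at hku
      show u ≤ 1
      linarith
  | succ n ih =>
    have hDsub : ω ∈ Dset b ξ α u (n+1) → ω ∈ Dset b ξ α u n := by
      intro h k hk; exact h k (le_trans hk (Nat.le_succ n))
    constructor
    · intro h
      have hn := hDsub h
      have hV : Vproc b ξ α u (n+1) ω = Vproc b ξ α u n ω
          + (Dset b ξ α u n).indicator (Mprod b ξ α n) ω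
            * (gfun b α (n+1) (ξ (n+1) ω) - 1) := rfl
      rw [hV, Set.indicator_of_mem hn, ih.1 hn, Mprod_succ]
      ring
    · intro h
      have hV : Vproc b ξ α u (n+1) ω = Vproc b ξ α u n ω
          + (Dset b ξ α u n).indicator (Mprod b ξ α n) ω
            * (gfun b α (n+1) (ξ (n+1) ω) - 1) := rfl
      by_cases hn : ω ∈ Dset b ξ α u n
      · -- the hit happens at time n+1
        have hVeq : Vproc b ξ α u (n+1) ω = Mprod b ξ α (n+1) ω := by
          rw [hV, Set.indicator_of_mem hn, ih.1 hn, Mprod_succ]; ring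
        rw [hVeq]
        simp only [Dset, Set.mem_setOf_eq, not_forall] at h
        obtain ⟨k, hk, hku⟩ := h
        push_neg at hku
        rcases Nat.lt_or_ge k (n+1) with hlt | hge
        · exact absurd (hn k (Nat.lt_succ_iff.mp hlt)) (not_lt.mpr hku)
        · have : k = n+1 := le_antisymm hk hge
          rwa [this] at hku
      · rw [hV, Set.indicator_of_notMem hn]
        have := ih.2 hn
        linarith

lemma ville (hu : 1 ≤ u) (n : ℕ) :
    P ((Dset b ξ α u n)ᶜ) ≤ ENNReal.ofReal u⁻¹ := by
  have hu0 : (0:ℝ) < u := lt_of_lt_of_le one_pos hu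
  have hmeasD := measurable_Dset b ξ α u hmeas n
  have hint := integrable_Vproc P b ξ α u hmeas hIndep hGauss hb hα n
  -- pointwise : indicator of complement * u ≤ V n
  have hpt : ∀ ω, Set.indicator ((Dset b ξ α u n)ᶜ) (fun _ => u) ω ≤ Vproc b ξ α u n ω := by
    intro ω
    by_cases hω : ω ∈ Dset b ξ α u n
    · rw [Set.indicator_of_notMem (by simpa using hω)]
      rw [(Vproc_pointwise b ξ α u hu n ω).1 hω]
      exact (Mprod_pos b ξ α n ω).le
    · rw [Set.indicator_of_mem (by simpa using hω)]
      exact (Vproc_pointwise b ξ α u hu n ω).2 hω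
  have hind_int : Integrable (Set.indicator ((Dset b ξ α u n)ᶜ) (fun _ => u)) P :=
    (integrable_const u).indicator hmeasD.compl
  have hle : ∫ ω, Set.indicator ((Dset b ξ α u n)ᶜ) (fun _ => u) ω ∂P
      ≤ ∫ ω, Vproc b ξ α u n ω ∂P := integral_mono hind_int hint.1 hpt
  rw [integral_indicator_const u hmeasD.compl] at hle
  have h1 : (P ((Dset b ξ α u n)ᶜ)).toReal * u ≤ 1 := by
    have := le_trans hle hint.2
    simpa [smul_eq_mul, measureReal_def] using this
  have h2 : (P ((Dset b ξ α u n)ᶜ)).toReal ≤ u⁻¹ := by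
    rw [← le_div_iff₀ hu0] at h1
    simpa [one_div] using h1
  calc P ((Dset b ξ α u n)ᶜ) = ENNReal.ofReal ((P ((Dset b ξ α u n)ᶜ)).toReal) :=
        (ENNReal.ofReal_toReal (measure_ne_top _ _)).symm
    _ ≤ ENNReal.ofReal u⁻¹ := ENNReal.ofReal_le_ofReal h2

end Ville
lemma integral_exp_neg_mul_Ioi {α : ℝ} (hα : 0 < α) :
    ∫ t in Set.Ioi (0:ℝ), Real.exp (-α * t) = α⁻¹ := by
  have key := integral_Ioi_of_hasDerivAt_of_tendsto
    (f := fun x : ℝ => -Real.exp (-α*x)/α) (f' := fun x : ℝ => Real.exp (-α*x))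
    (a := 0) (m := 0)
    (((Real.continuous_exp.comp (continuous_const.mul continuous_id)).neg.div_const α).continuousWithinAt)
    (fun x _ => by
      have h1 : HasDerivAt (fun x : ℝ => -α * x) (-α) x := by
        simpa using (hasDerivAt_id x).const_mul (-α)
      have h2 : HasDerivAt (fun x : ℝ => Real.exp (-α*x)) (Real.exp (-α*x) * (-α)) x :=
        (Real.hasDerivAt_exp _).comp x h1
      have h3 := (h2.neg).div_const α
      refine h3.congr_deriv ?_
      field_simp)
    (exp_neg_integrableOn_Ioi 0 hα)
    (by
      have h := (tendsto_exp_neg_atTop_nhds_zero.comp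
        (Filter.tendsto_id.const_mul_atTop hα)).neg.div_const α
      simp only [neg_zero, zero_div] at h
      convert h using 2 with x
      simp [Function.comp, neg_mul])
  rw [key]
  field_simp
  simp

theorem stmt7 {Ω : Type*} [MeasurableSpace Ω] (P : Measure Ω) [IsProbabilityMeasure P]
    (ξ : ℕ → Ω → ℝ) (hIndep : iIndepFun ξ P)
    (hGauss : ∀ i, Measure.map (ξ i) P = gaussianReal 0 1)
    (b : ℕ → ℝ) (hb : ∀ i, b i ^ 2 ≤ 1)
    (α : ℝ) (hα : α ∈ Set.Ioo (0 : ℝ) (1 / 2)) :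
    ∫ ω, (⨆ N : {n : ℕ // 1 ≤ n}, Sproc b ξ α N.1 ω) ∂P ≤ 1 / α := by
  obtain ⟨hα0, hα1⟩ := hα
  have hα2 : α ∈ Set.Ioo (0:ℝ) (1/2) := ⟨hα0, hα1⟩
  -- measurable modifications
  have hae : ∀ i, AEMeasurable (ξ i) P := by
    intro i
    by_contra h
    have h0 := Measure.map_of_not_aemeasurable h
    rw [hGauss i] at h0
    have h1 : (gaussianReal 0 1) Set.univ = 1 := measure_univ
    rw [h0] at h1
    simp at h1
  set ξ' : ℕ → Ω → ℝ := fun i => (hae i).mk (ξ i) with hξ'def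
  have hmeas' : ∀ i, Measurable (ξ' i) := fun i => (hae i).measurable_mk
  have haeeq : ∀ i, ξ i =ᵐ[P] ξ' i := fun i => (hae i).ae_eq_mk
  have hGauss' : ∀ i, Measure.map (ξ' i) P = gaussianReal 0 1 := fun i => by
    rw [← Measure.map_congr (haeeq i)]; exact hGauss i
  have hIndep' : iIndepFun ξ' P := by
    rw [iIndepFun_iff_measure_inter_preimage_eq_mul] at hIndep ⊢
    intro S sets hsets
    have hall : ∀ᵐ ω ∂P, ∀ i, ξ i ω = ξ' i ω := ae_all_iff.mpr haeeq
    have h1 : P (⋂ i ∈ S, ξ' i ⁻¹' sets i) = P (⋂ i ∈ S, ξ i ⁻¹' sets i) := by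
      apply measure_congr
      rw [Filter.eventuallyEq_set]
      filter_upwards [hall] with ω hω
      simp only [Set.mem_iInter, Set.mem_preimage]
      constructor
      · intro h i hi; rw [hω i]; exact h i hi
      · intro h i hi; rw [← hω i]; exact h i hi
    have h2 : ∀ i ∈ S, P (ξ' i ⁻¹' sets i) = P (ξ i ⁻¹' sets i) := by
      intro i _
      apply measure_congr
      rw [Filter.eventuallyEq_set]
      filter_upwards [haeeq i] with ω hω
      simp only [Set.mem_preimage]
      rw [hω]
    rw [h1, hIndep S hsets]
    exact (Finset.prod_congr rfl h2).symm
  -- the suprema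
  set Y : Ω → ℝ := fun ω => ⨆ N : {n : ℕ // 1 ≤ n}, Sproc b ξ α N.1 ω with hYdef
  set Y' : Ω → ℝ := fun ω => ⨆ N : {n : ℕ // 1 ≤ n}, Sproc b ξ' α N.1 ω with hY'def
  have hNE : Nonempty {n : ℕ // 1 ≤ n} := ⟨⟨1, le_rfl⟩⟩
  have hYae : Y =ᵐ[P] Y' := by
    filter_upwards [ae_all_iff.mpr haeeq] with ω hω
    have hS : ∀ N : {n : ℕ // 1 ≤ n}, Sproc b ξ α N.1 ω = Sproc b ξ' α N.1 ω := by
      intro N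
      unfold Sproc
      congr 1
      exact Finset.sum_congr rfl fun i _ => by rw [hω i]
    exact iSup_congr hS
  have hSmeas : ∀ N : ℕ, Measurable (Sproc b ξ' α N) := by
    intro N
    apply Measurable.sub _ measurable_const
    exact Finset.measurable_sum _ fun i _ =>
      ((((hmeas' i).pow_const 2).sub measurable_const).const_mul _)
  have hY'meas : Measurable Y' :=
    Measurable.iSup (fun N => hSmeas N.1)
  -- tail bound
  have htail : ∀ t : ℝ, 0 < t → P {ω | t < Y' ω} ≤ ENNReal.ofReal (Real.exp (-α * t)) := by
    intro t ht
    set u := Real.exp (α * t) with hudef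
    have hu1 : 1 ≤ u := by
      rw [hudef, ← Real.exp_zero]
      exact Real.exp_le_exp.mpr (by positivity)
    have hsub : {ω | t < Y' ω} ⊆ ⋃ n, (Dset b ξ' α u n)ᶜ := by
      intro ω hω
      simp only [Set.mem_setOf_eq] at hω
      have hex : ∃ N : {n : ℕ // 1 ≤ n}, t < Sproc b ξ' α N.1 ω := by
        by_contra hcon
        push_neg at hcon
        have : Y' ω ≤ t := ciSup_le hcon
        linarith
      obtain ⟨N, hN⟩ := hex
      refine Set.mem_iUnion.mpr ⟨N.1, fun hD => ?_⟩
      have hlt := hD N.1 le_rfl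
      rw [Mprod_eq_exp] at hlt
      have : u ≤ Real.exp (α * Sproc b ξ' α N.1 ω) := by
        rw [hudef]
        exact Real.exp_le_exp.mpr (mul_le_mul_of_nonneg_left hN.le hα0.le)
      linarith
    have hmono : Monotone (fun n => (Dset b ξ' α u n)ᶜ) := by
      intro m n hmn
      apply Set.compl_subset_compl.mpr
      intro ω hω k hk
      exact hω k (le_trans hk hmn)
    calc P {ω | t < Y' ω} ≤ P (⋃ n, (Dset b ξ' α u n)ᶜ) := measure_mono hsub
      _ = ⨆ n, P ((Dset b ξ' α u n)ᶜ) := hmono.directed_le.measure_iUnion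
      _ ≤ ENNReal.ofReal u⁻¹ := iSup_le fun n =>
          ville P b ξ' α u hmeas' hIndep' hGauss' hb hα2 hu1 n
      _ = ENNReal.ofReal (Real.exp (-α * t)) := by
          rw [hudef, ← Real.exp_neg]
          ring_nf
  -- conclude
  by_cases hint : Integrable Y P
  · have hint' : Integrable Y' P := hint.congr hYae
    have hgoal : ∫ ω, Y ω ∂P ≤ 1/α := by
      rw [integral_congr_ae hYae]
      set Z : Ω → ℝ := fun ω => max (Y' ω) 0 with hZdef
      have hZint : Integrable Z P := hint'.pos_part
      have h1 : ∫ ω, Y' ω ∂P ≤ ∫ ω, Z ω ∂P :=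
        integral_mono hint' hZint (fun ω => le_max_left _ _)
      have h2 : ∫ ω, Z ω ∂P = ∫ t in Set.Ioi (0:ℝ), (P {a | t < Z a}).toReal :=
        hZint.integral_eq_integral_meas_lt (ae_of_all _ fun ω => le_max_right _ _)
      have h3 : ∫ t in Set.Ioi (0:ℝ), (P {a | t < Z a}).toReal
          ≤ ∫ t in Set.Ioi (0:ℝ), Real.exp (-α * t) := by
        apply integral_mono_of_nonneg
        · exact ae_of_all _ fun t => ENNReal.toReal_nonneg
        · exact exp_neg_integrableOn_Ioi 0 hα0
        · filter_upwards [ae_restrict_mem measurableSet_Ioi] with t ht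
          have hset : {a | t < Z a} = {a | t < Y' a} := by
            ext a
            simp only [hZdef, Set.mem_setOf_eq, lt_max_iff]
            constructor
            · rintro (h | h)
              · exact h
              · exact absurd ht (by simp; linarith)
            · exact Or.inl
          rw [hset]
          exact ENNReal.toReal_le_of_le_ofReal (Real.exp_nonneg _) (htail t ht)
      have h4 : ∫ t in Set.Ioi (0:ℝ), Real.exp (-α * t) = α⁻¹ :=
        integral_exp_neg_mul_Ioi hα0
      rw [one_div]
      linarith
    exact hgoal
  · rw [integral_undef hint]
    positivity
end
end

section
/- For any α ∈ (0, 1/2) and any x > 0, P( sup_{N≥1} S_N > x ) ≤ exp( −α x ). -/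
open MeasureTheory ProbabilityTheory Finset Real
open scoped ENNReal NNReal

noncomputable section

/- ### auxiliary scalar lemmas -/

lemma pdf_smul_eq (t x : ℝ) :
    (gaussianPDFReal 0 1 x).toNNReal • rexp (t * x ^ 2)
      = (Real.sqrt (2 * π))⁻¹ * rexp (-(1/2 - t) * x ^ 2) := by
  rw [NNReal.smul_def, Real.coe_toNNReal _ (gaussianPDFReal_nonneg 0 1 x)]
  rw [gaussianPDFReal_def]
  simp only [NNReal.coe_one, mul_one, sub_zero, smul_eq_mul]
  rw [mul_assoc, ← Real.exp_add]
  ring_nf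

lemma gauss_exp_integrable {t : ℝ} (ht : t < 1/2) :
    Integrable (fun x => rexp (t * x ^ 2)) (gaussianReal 0 1) := by
  rw [gaussianReal_of_var_ne_zero 0 one_ne_zero, gaussianPDF_def]
  have hmeas : Measurable fun x => (gaussianPDFReal 0 1 x).toNNReal :=
    (measurable_gaussianPDFReal 0 1).real_toNNReal
  have h : (fun x => ENNReal.ofReal (gaussianPDFReal 0 1 x))
      = fun x => ((fun y => (gaussianPDFReal 0 1 y).toNNReal) x : ℝ≥0∞) := rfl
  rw [h, integrable_withDensity_iff_integrable_smul hmeas]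
  have heq : (fun x => (gaussianPDFReal 0 1 x).toNNReal • rexp (t * x ^ 2))
      = fun x => (Real.sqrt (2 * π))⁻¹ * rexp (-(1/2 - t) * x ^ 2) := by
    funext x; exact pdf_smul_eq t x
  rw [heq]
  exact (integrable_exp_neg_mul_sq (by linarith)).const_mul _

lemma gauss_exp_integral {t : ℝ} (ht : t < 1/2) :
    ∫ x, rexp (t * x ^ 2) ∂(gaussianReal 0 1) = (Real.sqrt (1 - 2*t))⁻¹ := by
  rw [gaussianReal_of_var_ne_zero 0 one_ne_zero, gaussianPDF_def]
  have hmeas : Measurable fun x => (gaussianPDFReal 0 1 x).toNNReal :=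
    (measurable_gaussianPDFReal 0 1).real_toNNReal
  have h : (fun x => ENNReal.ofReal (gaussianPDFReal 0 1 x))
      = fun x => ((fun y => (gaussianPDFReal 0 1 y).toNNReal) x : ℝ≥0∞) := rfl
  rw [h, integral_withDensity_eq_integral_smul hmeas]
  have heq : (fun x => (gaussianPDFReal 0 1 x).toNNReal • rexp (t * x ^ 2))
      = fun x => (Real.sqrt (2 * π))⁻¹ * rexp (-(1/2 - t) * x ^ 2) := by
    funext x; exact pdf_smul_eq t x
  rw [heq, integral_const_mul, integral_gaussian]
  rw [show π / (1/2 - t) = (2*π) * (1-2*t)⁻¹ by field_simp]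
  rw [Real.sqrt_mul (by positivity : (0:ℝ) ≤ 2*π) ((1-2*t)⁻¹), Real.sqrt_inv]
  have h2pi : Real.sqrt (2*π) ≠ 0 := by positivity
  field_simp

lemma hasSum_shift {u : ℝ} (h0 : 0 ≤ u) (h1 : u < 1) :
    HasSum (fun n : ℕ => u ^ (n + 2) / (n + 2)) (-Real.log (1 - u) - u) := by
  have h := Real.hasSum_pow_div_log_of_abs_lt_one (x := u) (by rw [abs_of_nonneg h0]; exact h1)
  have h2 := (hasSum_nat_add_iff' (f := fun n : ℕ => u ^ (n + 1) / (n + 1)) 1).2 h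
  simp only [Finset.range_one, Finset.sum_singleton, Nat.cast_zero] at h2
  convert h2 using 2 with n
  · rfl
  · push_cast; ring_nf
  · norm_num

/-- key scalar inequality: for `s ∈ [0,1]`, `-log(1-2αs)/2 - αs ≤ s² * (-α - log(1-2α)/2)`. -/
lemma log_ineq {α s : ℝ} (hα0 : 0 < α) (hα : α < 1/2) (hs0 : 0 ≤ s) (hs1 : s ≤ 1) :
    -Real.log (1 - 2*α*s) / 2 - α*s ≤ s^2 * (-α - Real.log (1 - 2*α) / 2) := by
  have hu0 : 0 ≤ 2*α*s := by positivity
  have hu1 : 2*α*s < 1 := by nlinarith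
  have hv0 : 0 ≤ 2*α := by positivity
  have hv1 : 2*α < 1 := by linarith
  have hA := hasSum_shift hu0 hu1
  have hB := (hasSum_shift hv0 hv1).mul_left (s^2)
  have hle : ∀ n : ℕ, (2*α*s) ^ (n + 2) / (n + 2) ≤ s^2 * ((2*α) ^ (n + 2) / (n + 2)) := by
    intro n
    have h1 : s ^ (n+2) ≤ s ^ 2 := pow_le_pow_of_le_one hs0 hs1 (by omega)
    calc (2*α*s)^(n+2)/((n:ℝ)+2) = (2*α)^(n+2) * s^(n+2) / ((n:ℝ)+2) := by rw [mul_pow]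
    _ ≤ (2*α)^(n+2) * s^2 / ((n:ℝ)+2) := by gcongr
    _ = s^2 * ((2*α)^(n+2)/((n:ℝ)+2)) := by ring
  have := hasSum_le hle hA hB
  nlinarith [this]

/-- monotonicity of `Indep` in both σ-algebras -/
lemma indep_mono {Ω : Type*} {m0 : MeasurableSpace Ω} {P : Measure Ω}
    {m₁ m₂ m₁' m₂' : MeasurableSpace Ω}
    (h : ProbabilityTheory.Indep m₁ m₂ P) (h1 : m₁' ≤ m₁) (h2 : m₂' ≤ m₂) :
    ProbabilityTheory.Indep m₁' m₂' P := by
  rw [ProbabilityTheory.Indep_iff] at h ⊢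
  exact fun t1 t2 ht1 ht2 => h t1 t2 (h1 _ ht1) (h2 _ ht2)

/- ### main section with measurable ξ -/

section Main

variable {Ω : Type*} [MeasurableSpace Ω] (P : Measure Ω) [IsProbabilityMeasure P]
  (ξ : ℕ → Ω → ℝ) (b : ℕ → ℝ) (α : ℝ)

/-- the multiplicative increment -/
def Yf (ξ : ℕ → Ω → ℝ) (b : ℕ → ℝ) (α : ℝ) (i : ℕ) (ω : Ω) : ℝ :=
  rexp (α * (b i ^ 2 * (ξ i ω ^ 2 - 1) - Ufun α * b i ^ 4))

/-- the candidate supermartingale -/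
def Mf (ξ : ℕ → Ω → ℝ) (b : ℕ → ℝ) (α : ℝ) (n : ℕ) (ω : Ω) : ℝ :=
  rexp (α * Sproc b ξ α n ω)

variable {P ξ b α}

lemma Mf_nonneg (n : ℕ) (ω : Ω) : 0 ≤ Mf ξ b α n ω := (Real.exp_pos _).le

lemma Yf_nonneg (i : ℕ) (ω : Ω) : 0 ≤ Yf ξ b α i ω := (Real.exp_pos _).le

lemma Mf_zero (ω : Ω) : Mf ξ b α 0 ω = 1 := by
  simp [Mf, Sproc]

lemma Mf_succ (n : ℕ) : Mf ξ b α (n+1) = fun ω => Mf ξ b α n ω * Yf ξ b α (n+1) ω := by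
  funext ω
  rw [Mf, Mf, Yf, ← Real.exp_add]
  congr 1
  rw [Sproc, Sproc, Finset.sum_Icc_succ_top (by omega), Finset.sum_Icc_succ_top (by omega)]
  ring

section meas

variable (hmeas : ∀ i, Measurable (ξ i))
include hmeas

/-- the natural filtration of ξ -/
def ffilt (hmeas : ∀ i, Measurable (ξ i)) : Filtration ℕ ‹MeasurableSpace Ω› :=
  Filtration.natural ξ (fun i => (hmeas i).stronglyMeasurable)

lemma xi_meas_ffilt {k n : ℕ} (hk : k ≤ n) : Measurable[ffilt hmeas n] (ξ k) := by
  have : MeasurableSpace.comap (ξ k) inferInstance ≤ ffilt hmeas n := by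
    have : ffilt hmeas n = ⨆ j ≤ n, MeasurableSpace.comap (ξ j) inferInstance := rfl
    rw [this]
    exact le_iSup₂ (f := fun j (_ : j ≤ n) => MeasurableSpace.comap (ξ j) inferInstance) k hk
  exact measurable_iff_comap_le.2 this

lemma Sproc_meas_ffilt (n : ℕ) : Measurable[ffilt hmeas n] (Sproc b ξ α n) := by
  apply Measurable.sub
  · apply Finset.measurable_sum
    intro k hk
    have hkn : k ≤ n := (Finset.mem_Icc.1 hk).2
    exact (((xi_meas_ffilt hmeas hkn).pow_const 2).sub measurable_const).const_mul _
  · exact measurable_const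

lemma Mf_meas_ffilt (n : ℕ) : Measurable[ffilt hmeas n] (Mf ξ b α n) :=
  Real.measurable_exp.comp ((Sproc_meas_ffilt hmeas n).const_mul α)

lemma Mf_adapted : StronglyAdapted (ffilt hmeas) (Mf ξ b α) :=
  fun n => (Mf_meas_ffilt hmeas n).stronglyMeasurable

lemma Mf_meas (n : ℕ) : Measurable (Mf ξ b α n) :=
  ((Mf_meas_ffilt hmeas n).le ((ffilt hmeas).le n))

omit hmeas in
lemma Yf_eq_comp (i : ℕ) : Yf ξ b α i =
    (fun y : ℝ => rexp (α * (b i ^ 2 * (y ^ 2 - 1) - Ufun α * b i ^ 4))) ∘ ξ i := rfl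

omit hmeas in
lemma Yf_comp_meas (i : ℕ) :
    Measurable (fun y : ℝ => rexp (α * (b i ^ 2 * (y ^ 2 - 1) - Ufun α * b i ^ 4))) := by
  fun_prop

variable (hIndep : iIndepFun ξ P)
include hIndep

lemma indep_step (n : ℕ) :
    ProbabilityTheory.Indep (ffilt hmeas n)
      (MeasurableSpace.comap (ξ (n+1)) inferInstance) P := by
  have h := ProbabilityTheory.indep_iSup_of_disjoint
    (fun i => (hmeas i).comap_le) hIndep.iIndep
    (S := Set.Iic n) (T := {n+1})
    (by rw [Set.disjoint_left]; intro a ha hb; simp at ha hb; omega)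
  have h1 : (⨆ i ∈ Set.Iic n, MeasurableSpace.comap (ξ i) inferInstance) = ffilt hmeas n := rfl
  have h2 : (⨆ i ∈ ({n+1} : Set ℕ), MeasurableSpace.comap (ξ i) inferInstance)
      = MeasurableSpace.comap (ξ (n+1)) inferInstance := by simp
  rwa [h1, h2] at h

lemma indepFun_of_ffilt_meas (n : ℕ) {F : Ω → ℝ} (hF : Measurable[ffilt hmeas n] F) :
    IndepFun F (Yf ξ b α (n+1)) P := by
  rw [ProbabilityTheory.IndepFun_iff_Indep]
  refine indep_mono (indep_step hmeas hIndep n) (measurable_iff_comap_le.1 hF) ?_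
  rw [Yf_eq_comp, ← MeasurableSpace.comap_comp]
  exact MeasurableSpace.comap_mono (measurable_iff_comap_le.1 (Yf_comp_meas (b := b) (α := α) (n+1)))


omit hmeas hIndep in
lemma Yf_decomp (i : ℕ) : Yf ξ b α i = fun ω =>
    rexp (-(α * b i ^ 2 + α * Ufun α * b i ^ 4)) * rexp ((α * b i ^ 2) * ξ i ω ^ 2) := by
  funext ω
  rw [Yf, ← Real.exp_add]
  congr 1
  ring

omit hmeas hIndep in
lemma t_lt_half (hα : α ∈ Set.Ioo (0 : ℝ) (1 / 2)) (hb : ∀ i, b i ^ 2 ≤ 1) (i : ℕ) :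
    α * b i ^ 2 < 1/2 := by
  obtain ⟨hα0, hα1⟩ := hα
  nlinarith [sq_nonneg (b i), hb i]

omit hIndep in
lemma Yf_integrable (hGauss : ∀ i, Measure.map (ξ i) P = gaussianReal 0 1)
    (hα : α ∈ Set.Ioo (0 : ℝ) (1 / 2)) (hb : ∀ i, b i ^ 2 ≤ 1) (i : ℕ) :
    Integrable (Yf ξ b α i) P := by
  set t := α * b i ^ 2 with ht_def
  have ht : t < 1/2 := t_lt_half hα hb i
  have hInt_map : Integrable (fun x => rexp (t * x ^ 2)) (Measure.map (ξ i) P) := by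
    rw [hGauss i]; exact gauss_exp_integrable ht
  have hAESM : AEStronglyMeasurable (fun x => rexp (t * x ^ 2)) (Measure.map (ξ i) P) :=
    (Real.continuous_exp.comp (continuous_const.mul (continuous_pow 2))).aestronglyMeasurable
  have hInt : Integrable (fun ω => rexp (t * ξ i ω ^ 2)) P :=
    (integrable_map_measure hAESM (hmeas i).aemeasurable).1 hInt_map
  rw [Yf_decomp]
  exact hInt.const_mul _

omit hIndep in
lemma Yf_integral_le_one (hGauss : ∀ i, Measure.map (ξ i) P = gaussianReal 0 1)
    (hα : α ∈ Set.Ioo (0 : ℝ) (1 / 2)) (hb : ∀ i, b i ^ 2 ≤ 1) (i : ℕ) :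
    ∫ ω, Yf ξ b α i ω ∂P ≤ 1 := by
  have ht : α * b i ^ 2 < 1/2 := t_lt_half hα hb i
  obtain ⟨hα0, hα1⟩ := hα
  set s := b i ^ 2 with hs_def
  set t := α * s with ht_def
  set c := α * Ufun α * b i ^ 4 with hc_def
  have hs0 : 0 ≤ s := sq_nonneg _
  have hs1 : s ≤ 1 := hb i
  have ht' : t < 1/2 := ht
  have ht0 : 0 ≤ t := by positivity
  have h12t : (0:ℝ) < 1 - 2*t := by linarith
  have hAESM : AEStronglyMeasurable (fun x => rexp (t * x ^ 2)) (Measure.map (ξ i) P) :=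
    (Real.continuous_exp.comp (continuous_const.mul (continuous_pow 2))).aestronglyMeasurable
  have hval : ∫ ω, rexp (t * ξ i ω ^ 2) ∂P = (Real.sqrt (1 - 2*t))⁻¹ := by
    rw [← integral_map (hmeas i).aemeasurable hAESM, hGauss i, gauss_exp_integral ht]
  have hc_eq : c = s^2 * (-α - Real.log (1 - 2*α) / 2) := by
    rw [hc_def, Ufun]
    have : b i ^ 4 = s ^ 2 := by rw [hs_def]; ring
    rw [this]
    field_simp
  have hlog : -Real.log (1 - 2*t) / 2 - t ≤ c := by
    rw [hc_eq, ht_def]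
    have := log_ineq hα0 hα1 hs0 hs1
    rw [show 2*(α*s) = 2*α*s by ring]
    linarith [this]
  have hsqrt : rexp (-(t+c)) ≤ Real.sqrt (1 - 2*t) := by
    rw [Real.le_sqrt (Real.exp_pos _).le h12t.le]
    have hpow : rexp (-(t+c)) ^ 2 = rexp (-(2*(t+c))) := by
      rw [← Real.exp_nat_mul]; congr 1; push_cast; ring
    rw [hpow, ← Real.le_log_iff_exp_le h12t]
    linarith [hlog]
  have hinv : (Real.sqrt (1 - 2*t))⁻¹ ≤ rexp (t+c) := by
    have h1 : (Real.sqrt (1 - 2*t))⁻¹ ≤ (rexp (-(t+c)))⁻¹ :=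
      inv_anti₀ (Real.exp_pos _) hsqrt
    rwa [← Real.exp_neg, neg_neg] at h1
  calc ∫ ω, Yf ξ b α i ω ∂P
      = rexp (-(t+c)) * ∫ ω, rexp (t * ξ i ω ^ 2) ∂P := by
        rw [Yf_decomp, MeasureTheory.integral_const_mul]
    _ = rexp (-(t+c)) * (Real.sqrt (1 - 2*t))⁻¹ := by rw [hval]
    _ ≤ rexp (-(t+c)) * rexp (t+c) := by
        exact mul_le_mul_of_nonneg_left hinv (Real.exp_pos _).le
    _ = 1 := by rw [← Real.exp_add, neg_add_cancel, Real.exp_zero]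


omit hmeas hIndep in
lemma Mf_succ' (n : ℕ) : Mf ξ b α (n+1) = Mf ξ b α n * Yf ξ b α (n+1) := Mf_succ n

lemma Mf_indepFun_Yf (n : ℕ) : IndepFun (Mf ξ b α n) (Yf ξ b α (n+1)) P :=
  indepFun_of_ffilt_meas hmeas hIndep n (Mf_meas_ffilt hmeas n)

lemma Mf_integrable (hGauss : ∀ i, Measure.map (ξ i) P = gaussianReal 0 1)
    (hα : α ∈ Set.Ioo (0 : ℝ) (1 / 2)) (hb : ∀ i, b i ^ 2 ≤ 1) (n : ℕ) :
    Integrable (Mf ξ b α n) P := by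
  induction n with
  | zero =>
    have : Mf ξ b α 0 = fun _ => (1:ℝ) := funext Mf_zero
    rw [this]; exact integrable_const 1
  | succ n ih =>
    rw [Mf_succ']
    exact (Mf_indepFun_Yf hmeas hIndep n).integrable_mul ih (Yf_integrable hmeas hGauss hα hb (n+1))

lemma Mf_integral_le_one (hGauss : ∀ i, Measure.map (ξ i) P = gaussianReal 0 1)
    (hα : α ∈ Set.Ioo (0 : ℝ) (1 / 2)) (hb : ∀ i, b i ^ 2 ≤ 1) (n : ℕ) :
    ∫ ω, Mf ξ b α n ω ∂P ≤ 1 := by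
  induction n with
  | zero =>
    have : Mf ξ b α 0 = fun _ => (1:ℝ) := funext Mf_zero
    rw [this]; simp
  | succ n ih =>
    rw [Mf_succ']
    rw [(Mf_indepFun_Yf hmeas hIndep n).integral_mul_eq_mul_integral
      (Mf_integrable hmeas hIndep hGauss hα hb n).aestronglyMeasurable (Yf_integrable hmeas hGauss hα hb (n+1)).aestronglyMeasurable]
    have h1 : 0 ≤ ∫ ω, Mf ξ b α n ω ∂P := integral_nonneg fun ω => Mf_nonneg n ω
    have h2 : 0 ≤ ∫ ω, Yf ξ b α (n+1) ω ∂P := integral_nonneg fun ω => Yf_nonneg _ ω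
    have h3 := Yf_integral_le_one hmeas hGauss hα hb (n+1)
    nlinarith

lemma Mf_supermartingale (hGauss : ∀ i, Measure.map (ξ i) P = gaussianReal 0 1)
    (hα : α ∈ Set.Ioo (0 : ℝ) (1 / 2)) (hb : ∀ i, b i ^ 2 ≤ 1) :
    Supermartingale (Mf ξ b α) (ffilt hmeas) P := by
  refine supermartingale_of_setIntegral_succ_le (Mf_adapted hmeas)
    (Mf_integrable hmeas hIndep hGauss hα hb) ?_
  intro n s hs
  have hs0 : MeasurableSet s := (ffilt hmeas).le n s hs
  set F := s.indicator (Mf ξ b α n) with hF_def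
  have hFmeas : Measurable[ffilt hmeas n] F := (Mf_meas_ffilt hmeas n).indicator hs
  have hind : IndepFun F (Yf ξ b α (n+1)) P := indepFun_of_ffilt_meas hmeas hIndep n hFmeas
  have hFint : Integrable F P := (Mf_integrable hmeas hIndep hGauss hα hb n).indicator hs0
  have hYint := Yf_integrable hmeas hGauss hα hb (n+1)
  have key : s.indicator (Mf ξ b α (n+1)) = F * Yf ξ b α (n+1) := by
    funext ω; by_cases hω : ω ∈ s
    · simp only [Set.indicator_of_mem hω, hF_def, Pi.mul_apply]
      exact congrFun (Mf_succ' n) ω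
    · simp [hF_def, Set.indicator_of_notMem hω]
  rw [← integral_indicator hs0, ← integral_indicator hs0, key,
      hind.integral_mul_eq_mul_integral hFint.aestronglyMeasurable hYint.aestronglyMeasurable]
  have hF0 : 0 ≤ ∫ ω, F ω ∂P :=
    integral_nonneg fun ω => Set.indicator_nonneg (fun ω _ => Mf_nonneg n ω) ω
  have h3 := Yf_integral_le_one hmeas hGauss hα hb (n+1)
  calc (∫ ω, F ω ∂P) * ∫ ω, Yf ξ b α (n+1) ω ∂P ≤ (∫ ω, F ω ∂P) * 1 :=
        mul_le_mul_of_nonneg_left h3 hF0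
    _ = ∫ ω, F ω ∂P := mul_one _

lemma Mf_maximal (hGauss : ∀ i, Measure.map (ξ i) P = gaussianReal 0 1)
    (hα : α ∈ Set.Ioo (0 : ℝ) (1 / 2)) (hb : ∀ i, b i ^ 2 ≤ 1) (x : ℝ) (hx : 0 < x) (n : ℕ) :
    P {ω | rexp (α * x) ≤ (Finset.range (n+1)).sup' Finset.nonempty_range_add_one
        (fun k => Mf ξ b α k ω)} ≤ ENNReal.ofReal (rexp (-(α * x))) := by
  set c := rexp (α * x) with hc_def
  set A := {ω | c ≤ (Finset.range (n+1)).sup' Finset.nonempty_range_add_one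
      fun k => Mf ξ b α k ω} with hA_def
  have hAmeas : MeasurableSet A :=
    measurableSet_le measurable_const
      (Finset.measurable_range_sup'' fun k _ => Mf_meas hmeas k)
  set τ : Ω → ℕ∞ := fun ω => ((hittingBtwn (Mf ξ b α) {y : ℝ | c ≤ y} 0 n ω : ℕ) : ℕ∞) with hτ_def
  have hsetmeas : MeasurableSet {y : ℝ | c ≤ y} := measurableSet_Ici
  have hτstop : IsStoppingTime (ffilt hmeas) τ :=
    (Mf_adapted hmeas).adapted.isStoppingTime_hittingBtwn hsetmeas
  have hsub : Submartingale (-(Mf ξ b α)) (ffilt hmeas) P :=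
    (Mf_supermartingale hmeas hIndep hGauss hα hb).neg
  have hτle : ∀ ω, τ ω ≤ n := fun ω => ENat.coe_le_coe.2 (hittingBtwn_le ω)
  have hSVint : Integrable (stoppedValue (Mf ξ b α) τ) P := by
    have h := hsub.integrable_stoppedValue hτstop hτle
    have heq : stoppedValue (-(Mf ξ b α)) τ = -(stoppedValue (Mf ξ b α) τ) := rfl
    rw [heq] at h
    exact integrable_neg_iff.1 h
  have hexp : ∫ ω, stoppedValue (Mf ξ b α) τ ω ∂P ≤ 1 := by
    have h := hsub.expected_stoppedValue_mono (isStoppingTime_const (ffilt hmeas) 0) hτstop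
      (fun ω => bot_le) hτle
    rw [stoppedValue_const] at h
    have e1 : ∫ ω, (-(Mf ξ b α)) 0 ω ∂P = -1 := by
      have h1 : (-(Mf ξ b α)) 0 = fun _ => (-1 : ℝ) := by
        funext ω; simp [Mf_zero ω]
      rw [h1]; simp
    have e2 : ∫ ω, stoppedValue (-(Mf ξ b α)) τ ω ∂P
        = - ∫ ω, stoppedValue (Mf ξ b α) τ ω ∂P := by
      rw [show stoppedValue (-(Mf ξ b α)) τ
          = fun ω => -(stoppedValue (Mf ξ b α) τ ω) from rfl, integral_neg]
    rw [e1, e2] at h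
    linarith
  have hon : ∀ ω ∈ A, c ≤ stoppedValue (Mf ξ b α) τ ω := by
    intro ω hω
    refine stoppedValue_hittingBtwn_mem ?_
    rw [hA_def, Set.mem_setOf_eq, Finset.le_sup'_iff] at hω
    obtain ⟨k, hk, hck⟩ := hω
    exact ⟨k, ⟨Nat.zero_le _, Nat.lt_succ_iff.1 (Finset.mem_range.1 hk)⟩, hck⟩
  have hgeq : c * (P A).toReal ≤ ∫ ω in A, stoppedValue (Mf ξ b α) τ ω ∂P :=
    setIntegral_ge_of_const_le_real hAmeas (measure_ne_top P A) hon hSVint.integrableOn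
  have hsetle : ∫ ω in A, stoppedValue (Mf ξ b α) τ ω ∂P
      ≤ ∫ ω, stoppedValue (Mf ξ b α) τ ω ∂P :=
    setIntegral_le_integral hSVint
      (Filter.Eventually.of_forall fun ω => Mf_nonneg _ ω)
  have final : c * (P A).toReal ≤ 1 := le_trans hgeq (le_trans hsetle hexp)
  rw [ENNReal.le_ofReal_iff_toReal_le (measure_ne_top P A) (Real.exp_pos _).le]
  have hcinv : rexp (-(α * x)) = c⁻¹ := by rw [hc_def, ← Real.exp_neg]
  have hc0 : 0 < c := Real.exp_pos _
  rw [hcinv]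
  calc (P A).toReal = c⁻¹ * (c * (P A).toReal) := by field_simp
    _ ≤ c⁻¹ * 1 := mul_le_mul_of_nonneg_left final (by positivity)
    _ = c⁻¹ := mul_one _

lemma main_measurable (hGauss : ∀ i, Measure.map (ξ i) P = gaussianReal 0 1)
    (hα : α ∈ Set.Ioo (0 : ℝ) (1 / 2)) (hb : ∀ i, b i ^ 2 ≤ 1) (x : ℝ) (hx : 0 < x) :
    P {ω | x < ⨆ N : {n : ℕ // 1 ≤ n}, Sproc b ξ α N.1 ω}
      ≤ ENNReal.ofReal (rexp (-(α * x))) := by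
  set A : ℕ → Set Ω := fun n => {ω | rexp (α * x) ≤
    (Finset.range (n+1)).sup' Finset.nonempty_range_add_one fun k => Mf ξ b α k ω} with hA_def
  have hmono : Monotone A := by
    intro m n hmn ω hω
    exact le_trans hω (Finset.sup'_mono (fun k => Mf ξ b α k ω)
      (Finset.range_subset_range.2 (Nat.succ_le_succ hmn)) Finset.nonempty_range_add_one)
  have hsubset : {ω | x < ⨆ N : {n : ℕ // 1 ≤ n}, Sproc b ξ α N.1 ω} ⊆ ⋃ n, A n := by
    intro ω hω
    rw [Set.mem_setOf_eq] at hω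
    have : Nonempty {n : ℕ // 1 ≤ n} := ⟨⟨1, le_refl 1⟩⟩
    by_cases hbdd : BddAbove (Set.range fun N : {n : ℕ // 1 ≤ n} => Sproc b ξ α N.1 ω)
    · obtain ⟨N, hN⟩ := (lt_ciSup_iff hbdd).1 hω
      refine Set.mem_iUnion.2 ⟨N.1, ?_⟩
      have hle : rexp (α * x) ≤ Mf ξ b α N.1 ω := by
        rw [Mf, Real.exp_le_exp]
        have := hα.1
        nlinarith
      refine le_trans hle (Finset.le_sup' (fun k => Mf ξ b α k ω) ?_)
      exact Finset.mem_range.2 (by omega)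
    · rw [Real.iSup_of_not_bddAbove hbdd] at hω
      linarith
  calc P {ω | x < ⨆ N : {n : ℕ // 1 ≤ n}, Sproc b ξ α N.1 ω}
      ≤ P (⋃ n, A n) := measure_mono hsubset
    _ = ⨆ n, P (A n) := hmono.measure_iUnion
    _ ≤ ENNReal.ofReal (rexp (-(α * x))) :=
        iSup_le fun n => Mf_maximal hmeas hIndep hGauss hα hb x hx n

end meas

end Main


theorem stmt8 {Ω : Type*} [MeasurableSpace Ω] (P : Measure Ω) [IsProbabilityMeasure P]
    (ξ : ℕ → Ω → ℝ) (hIndep : iIndepFun ξ P)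
    (hGauss : ∀ i, Measure.map (ξ i) P = gaussianReal 0 1)
    (b : ℕ → ℝ) (hb : ∀ i, b i ^ 2 ≤ 1)
    (α : ℝ) (hα : α ∈ Set.Ioo (0 : ℝ) (1 / 2)) :
    ∀ x : ℝ, 0 < x →
      P {ω | x < ⨆ N : {n : ℕ // 1 ≤ n}, Sproc b ξ α N.1 ω} ≤ ENNReal.ofReal (Real.exp (-(α * x))) := by
  intro x hx
  classical
  have hAEm : ∀ i, AEMeasurable (ξ i) P := by
    intro i
    by_contra hc
    have h0 := Measure.map_of_not_aemeasurable hc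
    exact (IsProbabilityMeasure.ne_zero (gaussianReal 0 1)) (by rw [← hGauss i, h0])
  set ξ' : ℕ → Ω → ℝ := fun i => (hAEm i).mk (ξ i) with hξ'
  have hmeas' : ∀ i, Measurable (ξ' i) := fun i => (hAEm i).measurable_mk
  have heq : ∀ i, ξ i =ᵐ[P] ξ' i := fun i => (hAEm i).ae_eq_mk
  have hall : ∀ᵐ ω ∂P, ∀ i, ξ i ω = ξ' i ω := ae_all_iff.2 heq
  have hGauss' : ∀ i, Measure.map (ξ' i) P = gaussianReal 0 1 := fun i => by
    rw [← Measure.map_congr (heq i)]; exact hGauss i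
  have hIndep' : iIndepFun ξ' P := by
    rw [iIndepFun_iff] at hIndep ⊢
    intro s f' H
    set t : ℕ → Set ℝ := fun i =>
      if h : i ∈ s then (MeasurableSpace.measurableSet_comap.1 (H i h)).choose
      else Set.univ with ht_def
    have htspec : ∀ i ∈ s, MeasurableSet (t i) ∧ ξ' i ⁻¹' (t i) = f' i := by
      intro i hi
      have := (MeasurableSpace.measurableSet_comap.1 (H i hi)).choose_spec
      simp only [ht_def, dif_pos hi]
      exact this
    have hae : ∀ᵐ ω ∂P, ∀ i ∈ s, (ω ∈ f' i ↔ ω ∈ ξ i ⁻¹' (t i)) := by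
      filter_upwards [hall] with ω hω
      intro i hi
      rw [← (htspec i hi).2, Set.mem_preimage, Set.mem_preimage, hω i]
    have h1 : P (⋂ i ∈ s, f' i) = P (⋂ i ∈ s, ξ i ⁻¹' (t i)) := by
      refine measure_congr (Filter.eventuallyEq_set.2 ?_)
      filter_upwards [hae] with ω hω
      simp only [Set.mem_iInter]
      exact ⟨fun h i hi => (hω i hi).1 (h i hi), fun h i hi => (hω i hi).2 (h i hi)⟩
    have h2 : ∀ i ∈ s, P (f' i) = P (ξ i ⁻¹' (t i)) := by
      intro i hi
      refine measure_congr (Filter.eventuallyEq_set.2 ?_)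
      filter_upwards [hae] with ω hω
      exact hω i hi
    rw [h1, Finset.prod_congr rfl h2]
    exact hIndep s (f' := fun i => ξ i ⁻¹' (t i))
      (fun i hi => MeasurableSpace.measurableSet_comap.2 ⟨t i, (htspec i hi).1, rfl⟩)
  have hev : {ω | x < ⨆ N : {n : ℕ // 1 ≤ n}, Sproc b ξ α N.1 ω}
      =ᵐ[P] {ω | x < ⨆ N : {n : ℕ // 1 ≤ n}, Sproc b ξ' α N.1 ω} := by
    refine Filter.eventuallyEq_set.2 ?_
    filter_upwards [hall] with ω hω
    have hS : ∀ N, Sproc b ξ α N ω = Sproc b ξ' α N ω := by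
      intro N
      unfold Sproc
      congr 1
      exact Finset.sum_congr rfl fun k _ => by rw [hω k]
    have hfun : (fun N : {n : ℕ // 1 ≤ n} => Sproc b ξ α N.1 ω)
        = fun N : {n : ℕ // 1 ≤ n} => Sproc b ξ' α N.1 ω := funext fun N => hS N.1
    show (x < ⨆ N : {n : ℕ // 1 ≤ n}, Sproc b ξ α N.1 ω)
      ↔ (x < ⨆ N : {n : ℕ // 1 ≤ n}, Sproc b ξ' α N.1 ω)
    rw [hfun]
  rw [measure_congr hev]
  exact main_measurable hmeas' hIndep' hGauss' hα hb x hx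


end
end

section
/- There exists a constant C > 0, depending only on C1, such that for all N ≥ 2 and all t ∈ ℝ, | E[ exp( i t η_N / √(2Σ_N) ) ] | ≤ ( 1 + C t² / N )^{−N/8}. -/
open MeasureTheory ProbabilityTheory Finset Real

open scoped ENNReal NNReal

noncomputable section

/-- `η_N = ∑_{i=1}^N σ_i² (ξ_i² - 1)`. -/
def eta {Ω : Type*} (σ : ℕ → ℝ) (ξ : ℕ → Ω → ℝ) (N : ℕ) (ω : Ω) : ℝ :=
  ∑ i ∈ Finset.Icc 1 N, σ i ^ 2 * (ξ i ω ^ 2 - 1)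

/-- `Σ_N = ∑_{i=1}^N σ_i⁴`. -/
def SigN (σ : ℕ → ℝ) (N : ℕ) : ℝ := ∑ i ∈ Finset.Icc 1 N, σ i ^ 4

lemma gauss_cf (s : ℝ) :
    ∫ x : ℝ, Complex.exp ((s : ℂ) * Complex.I * (x : ℂ) ^ 2) ∂(gaussianReal 0 1) =
      ((Real.sqrt (2 * π))⁻¹ : ℝ) * ((π : ℂ) / (1/2 - s * Complex.I)) ^ (1/2 : ℂ) := by
  have hge : gaussianReal 0 1 =
      volume.withDensity (fun x => ((Real.toNNReal (gaussianPDFReal 0 1 x)) : ℝ≥0∞)) := by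
    rw [gaussianReal_of_var_ne_zero _ one_ne_zero]; rfl
  rw [hge, integral_withDensity_eq_integral_smul
    (f := fun x => Real.toNNReal (gaussianPDFReal 0 1 x))
    (measurable_real_toNNReal.comp (measurable_gaussianPDFReal 0 1))]
  have hpt : ∀ x : ℝ, (Real.toNNReal (gaussianPDFReal 0 1 x)) •
      Complex.exp ((s : ℂ) * Complex.I * (x : ℂ) ^ 2) =
      ((Real.sqrt (2 * π))⁻¹ : ℝ) * Complex.exp (-(1/2 - s * Complex.I) * (x : ℂ) ^ 2) := by
    intro x
    have hnn : 0 ≤ gaussianPDFReal 0 1 x := gaussianPDFReal_nonneg 0 1 x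
    rw [NNReal.smul_def, Real.coe_toNNReal _ hnn, Complex.real_smul]
    rw [gaussianPDFReal_def]
    simp only [NNReal.coe_one, mul_one, sub_zero]
    push_cast
    rw [mul_assoc]
    congr 1
    rw [← Complex.exp_add]
    congr 1
    ring
  simp_rw [hpt]
  rw [integral_const_mul, integral_gaussian_complex (by norm_num)]

lemma gauss_norm (s : ℝ) :
    ‖∫ x : ℝ, Complex.exp (((s * (x ^ 2 - 1) : ℝ) : ℂ) * Complex.I) ∂(gaussianReal 0 1)‖ =
      (1 + 4 * s ^ 2) ^ (-(1/4) : ℝ) := by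
  have hsplit : ∀ x : ℝ, Complex.exp (((s * (x ^ 2 - 1) : ℝ) : ℂ) * Complex.I) =
      Complex.exp (((-s : ℝ) : ℂ) * Complex.I) *
        Complex.exp ((s : ℂ) * Complex.I * (x : ℂ) ^ 2) := by
    intro x
    rw [← Complex.exp_add]
    congr 1
    push_cast
    ring
  simp_rw [hsplit]
  rw [integral_const_mul, gauss_cf, norm_mul, norm_mul]
  have h1 : ‖Complex.exp (((-s : ℝ) : ℂ) * Complex.I)‖ = 1 := Complex.norm_exp_ofReal_mul_I _
  rw [h1, one_mul]
  -- norms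
  have hb : ‖(1:ℂ)/2 - s * Complex.I‖ = Real.sqrt (1/4 + s ^ 2) := by
    rw [Complex.norm_def, Complex.normSq_apply]
    norm_num
    ring_nf
  have h2 : ‖((π : ℂ) / (1/2 - s * Complex.I)) ^ (1/2 : ℂ)‖
      = (π / Real.sqrt (1/4 + s ^ 2)) ^ ((1:ℝ)/2) := by
    rw [show ((π : ℂ) / (1/2 - s * Complex.I)) ^ (1/2 : ℂ)
        = ((π : ℂ) / (1/2 - s * Complex.I)) ^ (((1/2:ℝ) : ℝ) : ℂ) by norm_num,
      Complex.norm_cpow_real, norm_div, hb, Complex.norm_real, Real.norm_eq_abs,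
      abs_of_pos Real.pi_pos]
  rw [h2]
  have hpos : (0:ℝ) < 1/4 + s ^ 2 := by positivity
  have h14 : (0:ℝ) < 1 + 4 * s ^ 2 := by positivity
  rw [Complex.norm_real, Real.norm_eq_abs, abs_of_pos (by positivity)]
  refine (pow_left_inj₀ (n := 4) (by positivity) (by positivity) (by norm_num)).mp ?_
  have e1 : ((Real.sqrt (2*π))⁻¹) ^ 4 = ((2*π)^2)⁻¹ := by
    rw [inv_pow]
    congr 1
    rw [show (4:ℕ) = 2*2 by norm_num, pow_mul, Real.sq_sqrt (by positivity)]
  have e2 : ((π / Real.sqrt (1/4 + s ^ 2)) ^ ((1:ℝ)/2)) ^ 4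
      = π^2 / (1/4 + s^2) := by
    rw [← Real.rpow_natCast (_ ^ ((1:ℝ)/2)) 4, ← Real.rpow_mul (by positivity)]
    norm_num
    rw [div_pow, Real.sq_sqrt hpos.le]
  have e3 : ((1 + 4 * s ^ 2) ^ (-(1/4) : ℝ)) ^ 4 = (1 + 4*s^2)⁻¹ := by
    rw [← Real.rpow_natCast (_ ^ (-(1/4) : ℝ)) 4, ← Real.rpow_mul h14.le]
    norm_num
    exact Real.rpow_neg_one _
  rw [mul_pow, e1, e2, e3]
  field_simp
  ring

lemma integral_ofReal_add_mul_I {Ω : Type} [MeasurableSpace Ω] {μ : Measure Ω}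
    (f g : Ω → ℝ) (hf : Integrable f μ) (hg : Integrable g μ) :
    ∫ ω, (((f ω : ℂ)) + (g ω : ℂ) * Complex.I) ∂μ
      = ((∫ ω, f ω ∂μ : ℝ) : ℂ) + ((∫ ω, g ω ∂μ : ℝ) : ℂ) * Complex.I := by
  rw [integral_add (f := fun ω => ((f ω : ℝ) : ℂ)) (g := fun ω => ((g ω : ℝ) : ℂ) * Complex.I)
      hf.ofReal (hg.ofReal.mul_const Complex.I),
    integral_mul_const]
  congr 1
  · exact integral_ofReal
  · congr 1
    exact integral_ofReal

lemma indepFun_integral_mul_complex {Ω : Type} [MeasurableSpace Ω] {μ : Measure Ω}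
    [IsFiniteMeasure μ] {X Y : Ω → ℂ} (h : IndepFun X Y μ)
    (hX : Integrable X μ) (hY : Integrable Y μ) :
    ∫ ω, X ω * Y ω ∂μ = (∫ ω, X ω ∂μ) * ∫ ω, Y ω ∂μ := by
  set a : Ω → ℝ := fun ω => (X ω).re with ha
  set b : Ω → ℝ := fun ω => (X ω).im with hb₀
  set c : Ω → ℝ := fun ω => (Y ω).re with hc
  set d : Ω → ℝ := fun ω => (Y ω).im with hd
  have hia : Integrable a μ := hX.re
  have hib : Integrable b μ := hX.im
  have hic : Integrable c μ := hY.re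
  have hid : Integrable d μ := hY.im
  have hac : IndepFun a c μ := h.comp Complex.measurable_re Complex.measurable_re
  have had : IndepFun a d μ := h.comp Complex.measurable_re Complex.measurable_im
  have hbc : IndepFun b c μ := h.comp Complex.measurable_im Complex.measurable_re
  have hbd : IndepFun b d μ := h.comp Complex.measurable_im Complex.measurable_im
  have eX : ∀ ω, X ω = (a ω : ℂ) + (b ω : ℂ) * Complex.I := fun ω =>
    (Complex.re_add_im (X ω)).symm
  have eY : ∀ ω, Y ω = (c ω : ℂ) + (d ω : ℂ) * Complex.I := fun ω =>
    (Complex.re_add_im (Y ω)).symm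
  have hXY : ∀ ω, X ω * Y ω = ((a ω * c ω - b ω * d ω : ℝ) : ℂ)
      + ((a ω * d ω + b ω * c ω : ℝ) : ℂ) * Complex.I := by
    intro ω
    rw [eX ω, eY ω]
    push_cast
    linear_combination ((b ω : ℂ) * (d ω : ℂ)) * Complex.I_sq
  simp_rw [hXY]
  rw [integral_ofReal_add_mul_I (fun ω => a ω * c ω - b ω * d ω)
      (fun ω => a ω * d ω + b ω * c ω)
      ((hac.integrable_mul hia hic).sub (hbd.integrable_mul hib hid))
      ((had.integrable_mul hia hid).add (hbc.integrable_mul hib hic)),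
    integral_sub (f := fun ω => a ω * c ω) (g := fun ω => b ω * d ω)
      (hac.integrable_mul hia hic) (hbd.integrable_mul hib hid),
    integral_add (f := fun ω => a ω * d ω) (g := fun ω => b ω * c ω)
      (had.integrable_mul hia hid) (hbc.integrable_mul hib hic)]
  have fac : ∀ (f g : Ω → ℝ), IndepFun f g μ → Integrable f μ → Integrable g μ →
      ∫ ω, f ω * g ω ∂μ = (∫ ω, f ω ∂μ) * ∫ ω, g ω ∂μ := fun f g hfg hf hg =>
    hfg.integral_fun_mul_eq_mul_integral hf.aestronglyMeasurable hg.aestronglyMeasurable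
  rw [fac a c hac hia hic, fac a d had hia hid, fac b c hbc hib hic, fac b d hbd hib hid]
  have eIX : ∫ ω, X ω ∂μ = ((∫ ω, a ω ∂μ : ℝ) : ℂ) + ((∫ ω, b ω ∂μ : ℝ) : ℂ) * Complex.I := by
    calc ∫ ω, X ω ∂μ = ∫ ω, ((a ω : ℂ) + (b ω : ℂ) * Complex.I) ∂μ := by simp_rw [← eX]
    _ = _ := integral_ofReal_add_mul_I _ _ hia hib
  have eIY : ∫ ω, Y ω ∂μ = ((∫ ω, c ω ∂μ : ℝ) : ℂ) + ((∫ ω, d ω ∂μ : ℝ) : ℂ) * Complex.I := by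
    calc ∫ ω, Y ω ∂μ = ∫ ω, ((c ω : ℂ) + (d ω : ℂ) * Complex.I) ∂μ := by simp_rw [← eY]
    _ = _ := integral_ofReal_add_mul_I _ _ hic hid
  rw [eIX, eIY]
  generalize (∫ ω, a ω ∂μ) = A
  generalize (∫ ω, b ω ∂μ) = B
  generalize (∫ ω, c ω ∂μ) = C
  generalize (∫ ω, d ω ∂μ) = D
  push_cast
  linear_combination (-(B : ℂ) * (D : ℂ)) * Complex.I_sq

lemma iIndep_integral_prod {Ω : Type} [MeasurableSpace Ω] {P : Measure Ω}
    [IsProbabilityMeasure P] (Y : ℕ → Ω → ℂ)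
    (hm : ∀ i, Measurable (Y i)) (hb : ∀ i ω, ‖Y i ω‖ ≤ 1)
    (hY : iIndepFun Y P) (s : Finset ℕ) :
    ∫ ω, ∏ i ∈ s, Y i ω ∂P = ∏ i ∈ s, ∫ ω, Y i ω ∂P := by
  classical
  induction s using Finset.induction_on with
  | empty => simp
  | @insert j s hj ih =>
    have hint : ∀ (u : Finset ℕ), Integrable (fun ω => ∏ i ∈ u, Y i ω) P := by
      intro u
      refine Integrable.mono' (integrable_const (1 : ℝ))
        (Finset.measurable_prod u fun i _ => hm i).aestronglyMeasurable
        (ae_of_all _ fun ω => ?_)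
      rw [norm_prod]
      exact Finset.prod_le_one (fun i _ => norm_nonneg _) (fun i _ => hb i ω)
    have hind : IndepFun (∏ i ∈ s, Y i) (Y j) P :=
      hY.indepFun_finsetProd_of_notMem hm hj
    have heq : (∏ i ∈ s, Y i) = fun ω => ∏ i ∈ s, Y i ω := by
      ext ω; exact Finset.prod_apply ω s Y
    have hYj : Integrable (Y j) P :=
      (integrable_const (1:ℝ)).mono' (hm j).aestronglyMeasurable (ae_of_all _ fun ω => hb j ω)
    have key := indepFun_integral_mul_complex hind.symm hYj (heq ▸ hint s)
    simp_rw [Finset.prod_insert hj, heq] at *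
    rw [key, ih]

lemma iIndepFun_ae_congr {Ω : Type} [MeasurableSpace Ω] {μ : Measure Ω}
    {f f' : ℕ → Ω → ℝ} (h : iIndepFun f μ)
    (hff' : ∀ i, f i =ᵐ[μ] f' i) : iIndepFun f' μ := by
  rw [iIndepFun_iff_measure_inter_preimage_eq_mul] at h ⊢
  intro S sets hsets
  have hae : ∀ i, (f' i ⁻¹' sets i : Set Ω) =ᵐ[μ] (f i ⁻¹' sets i : Set Ω) := by
    intro i
    filter_upwards [hff' i] with ω hω
    show (f' i ω ∈ sets i) = (f i ω ∈ sets i)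
    rw [hω]
  have h1 : μ (⋂ i ∈ S, f' i ⁻¹' sets i) = μ (⋂ i ∈ S, f i ⁻¹' sets i) := by
    apply measure_congr
    have : ∀ᵐ ω ∂μ, ∀ i ∈ S, f i ω = f' i ω :=
      (ae_ball_iff S.countable_toSet).2 fun i _ => hff' i
    filter_upwards [this] with ω hω
    show (ω ∈ ⋂ i ∈ S, f' i ⁻¹' sets i) = (ω ∈ ⋂ i ∈ S, f i ⁻¹' sets i)
    simp only [Set.mem_iInter, Set.mem_preimage, eq_iff_iff]
    constructor <;> intro hmem i hi
    · rw [hω i hi]; exact hmem i hi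
    · rw [← hω i hi]; exact hmem i hi
  rw [h1, h S hsets]
  exact Finset.prod_congr rfl fun i hi => (measure_congr (hae i)).symm

lemma final_bound (C1 t : ℝ) (hC1 : 0 < C1) (σ : ℕ → ℝ) (hσ : ∀ k, 0 < σ k)
    (hpoly : ∀ k : ℕ, 1 < k →
      C1 * Real.sqrt ((1 / (2 * (k : ℝ))) * ∑ i ∈ Finset.Icc 1 (2 * k), σ i ^ 4) ≤ σ k ^ 2)
    (N : ℕ) (hN : 2 ≤ N) :
    ∏ i ∈ Finset.Icc 1 N,
        (1 + 4 * (t * σ i ^ 2 / Real.sqrt (2 * SigN σ N)) ^ 2) ^ (-(1/4) : ℝ) ≤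
      (1 + C1 ^ 2 * t ^ 2 / (N : ℝ)) ^ (-(N : ℝ) / 8) := by
  have hNpos : (0:ℝ) < N := by positivity
  have hSig : 0 < SigN σ N := by
    apply Finset.sum_pos (fun i _ => pow_pos (hσ i) 4)
    exact ⟨1, by simp only [Finset.mem_Icc]; omega⟩
  set c : ℝ := 1 + C1 ^ 2 * t ^ 2 / (N : ℝ) with hc
  have hc1 : (1:ℝ) ≤ c := by
    rw [hc]
    have : 0 ≤ C1 ^ 2 * t ^ 2 / (N : ℝ) := by positivity
    linarith
  set M : ℕ := max 2 ((N + 1) / 2) with hM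
  set S : Finset ℕ := Finset.Icc M N with hS
  have hsub : S ⊆ Finset.Icc 1 N := Finset.Icc_subset_Icc (by omega) le_rfl
  have hfac_pos : ∀ i : ℕ, (0:ℝ) < 1 + 4 * (t * σ i ^ 2 / Real.sqrt (2 * SigN σ N)) ^ 2 := by
    intro i; positivity
  have step1 : ∏ i ∈ Finset.Icc 1 N,
      (1 + 4 * (t * σ i ^ 2 / Real.sqrt (2 * SigN σ N)) ^ 2) ^ (-(1/4) : ℝ) ≤
      ∏ i ∈ S, (1 + 4 * (t * σ i ^ 2 / Real.sqrt (2 * SigN σ N)) ^ 2) ^ (-(1/4) : ℝ) := by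
    rw [← Finset.prod_sdiff hsub]
    apply mul_le_of_le_one_left
      (Finset.prod_nonneg fun i _ => Real.rpow_nonneg (hfac_pos i).le _)
    apply Finset.prod_le_one (fun i _ => Real.rpow_nonneg (hfac_pos i).le _)
    intro i _
    apply Real.rpow_le_one_of_one_le_of_nonpos
    · nlinarith [sq_nonneg (t * σ i ^ 2 / Real.sqrt (2 * SigN σ N))]
    · norm_num
  have hkey : ∀ i ∈ S, c ≤ 1 + 4 * (t * σ i ^ 2 / Real.sqrt (2 * SigN σ N)) ^ 2 := by
    intro i hi
    rw [hS, Finset.mem_Icc] at hi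
    have hi2 : 2 ≤ i := le_trans (le_max_left _ _) hi.1
    have hiN : i ≤ N := hi.2
    have hN2i : N ≤ 2 * i := by
      have : (N + 1) / 2 ≤ i := le_trans (le_max_right _ _) hi.1
      omega
    have hSigmono : SigN σ N ≤ ∑ j ∈ Finset.Icc 1 (2 * i), σ j ^ 4 := by
      apply Finset.sum_le_sum_of_subset_of_nonneg
        (Finset.Icc_subset_Icc le_rfl (by omega))
      intro j _ _; positivity
    have hpi := hpoly i (by omega)
    have hipos : (0:ℝ) < i := by positivity
    have hdd : SigN σ N / (2 * (N:ℝ)) ≤ (1 / (2 * (i:ℝ))) * ∑ j ∈ Finset.Icc 1 (2*i), σ j ^ 4 := by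
      rw [one_div_mul_eq_div]
      apply div_le_div₀ (by positivity) hSigmono (by positivity)
      have : (i:ℝ) ≤ (N:ℝ) := by exact_mod_cast hiN
      linarith
    have hlow : C1 * Real.sqrt (SigN σ N / (2 * (N:ℝ))) ≤ σ i ^ 2 :=
      le_trans (mul_le_mul_of_nonneg_left (Real.sqrt_le_sqrt hdd) hC1.le) hpi
    have hx : (0:ℝ) ≤ SigN σ N / (2 * (N:ℝ)) := by positivity
    have hsq := Real.sq_sqrt hx
    have hr : (C1 * Real.sqrt (SigN σ N / (2 * (N:ℝ)))) ^ 2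
        = C1 ^ 2 * (SigN σ N / (2 * (N:ℝ))) := by
      rw [mul_pow, hsq]
    have h4 : C1 ^ 2 * SigN σ N ≤ (σ i ^ 2) ^ 2 * (2 * (N:ℝ)) := by
      have hmm := mul_self_le_mul_self
        (mul_nonneg hC1.le (Real.sqrt_nonneg _)) hlow
      have hsqle : (C1 * Real.sqrt (SigN σ N / (2 * (N:ℝ)))) ^ 2 ≤ (σ i ^ 2) ^ 2 := by
        nlinarith [hmm]
      have hmul := mul_le_mul_of_nonneg_right hsqle
        (by positivity : (0:ℝ) ≤ 2 * (N:ℝ))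
      rw [hr] at hmul
      calc C1 ^ 2 * SigN σ N
          = C1 ^ 2 * (SigN σ N / (2 * (N:ℝ))) * (2 * (N:ℝ)) := by field_simp
        _ ≤ _ := hmul
    have hq : 4 * (t * σ i ^ 2 / Real.sqrt (2 * SigN σ N)) ^ 2
        = 4 * t ^ 2 * (σ i ^ 2) ^ 2 / (2 * SigN σ N) := by
      rw [div_pow, mul_pow, Real.sq_sqrt (by positivity)]
      ring
    rw [hq, hc]
    have hxy : C1 ^ 2 * t ^ 2 / (N : ℝ) ≤ 4 * t ^ 2 * (σ i ^ 2) ^ 2 / (2 * SigN σ N) := by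
      rw [div_le_div_iff₀ hNpos (by positivity)]
      nlinarith [mul_le_mul_of_nonneg_left h4 (sq_nonneg t)]
    linarith
  have step2 : ∏ i ∈ S, (1 + 4 * (t * σ i ^ 2 / Real.sqrt (2 * SigN σ N)) ^ 2) ^ (-(1/4) : ℝ) ≤
      ∏ _i ∈ S, c ^ (-(1/4) : ℝ) := by
    apply Finset.prod_le_prod (fun i _ => Real.rpow_nonneg (hfac_pos i).le _)
    intro i hi
    exact Real.rpow_le_rpow_of_nonpos (lt_of_lt_of_le one_pos hc1) (hkey i hi) (by norm_num)
  have hcpos : (0:ℝ) < c := lt_of_lt_of_le one_pos hc1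
  have step3 : ∏ _i ∈ S, c ^ (-(1/4) : ℝ) = c ^ ((-(1/4) : ℝ) * S.card) := by
    rw [Finset.prod_const, ← Real.rpow_natCast (c ^ (-(1/4) : ℝ)) S.card,
      ← Real.rpow_mul hcpos.le]
  have hcard : N ≤ 2 * S.card := by
    rw [hS, Nat.card_Icc]
    omega
  have step4 : c ^ ((-(1/4) : ℝ) * S.card) ≤ c ^ (-(N:ℝ) / 8) := by
    apply Real.rpow_le_rpow_of_exponent_le hc1
    have : (N:ℝ) ≤ 2 * (S.card : ℝ) := by exact_mod_cast hcard
    linarith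
  calc _ ≤ _ := step1
    _ ≤ _ := step2
    _ = _ := step3
    _ ≤ _ := step4

theorem stmt14 (C1 : ℝ) (hC1 : 0 < C1) :
    ∃ C > (0 : ℝ),
      ∀ (Ω : Type) [MeasurableSpace Ω] (P : Measure Ω) [IsProbabilityMeasure P]
        (ξ : ℕ → Ω → ℝ),
        iIndepFun ξ P →
        (∀ i, Measure.map (ξ i) P = gaussianReal 0 1) →
      ∀ σ : ℕ → ℝ, (∀ k, 0 < σ k) →
        (∀ j k : ℕ, 1 ≤ j → j ≤ k → σ j ≤ σ k) →
        (∀ k : ℕ, 1 < k →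
          C1 * Real.sqrt ((1 / (2 * (k : ℝ))) * ∑ i ∈ Finset.Icc 1 (2 * k), σ i ^ 4) ≤
            σ k ^ 2) →
      ∀ N : ℕ, 2 ≤ N → ∀ t : ℝ,
        ‖∫ ω, Complex.exp (Complex.I * (t : ℂ) *
            ((eta σ ξ N ω / Real.sqrt (2 * SigN σ N) : ℝ) : ℂ)) ∂P‖ ≤
          (1 + C * t ^ 2 / (N : ℝ)) ^ (-(N : ℝ) / 8) := by
  refine ⟨C1 ^ 2, by positivity, ?_⟩
  intro Ω _ P _ ξ hindep hmap σ hσ _hmono hpoly N hN t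
  -- measurable modifications of ξ
  have hAE : ∀ i, AEMeasurable (ξ i) P := by
    intro i
    apply aemeasurable_of_map_neZero
    rw [hmap i]
    infer_instance
  set ξ' : ℕ → Ω → ℝ := fun i => (hAE i).mk (ξ i) with hξ'
  have hmeas' : ∀ i, Measurable (ξ' i) := fun i => (hAE i).measurable_mk
  have heq : ∀ i, ξ i =ᵐ[P] ξ' i := fun i => (hAE i).ae_eq_mk
  have hmap' : ∀ i, Measure.map (ξ' i) P = gaussianReal 0 1 := by
    intro i
    rw [← Measure.map_congr (heq i), hmap i]
  have hindep' : iIndepFun ξ' P := iIndepFun_ae_congr hindep heq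
  set r : ℝ := Real.sqrt (2 * SigN σ N) with hr
  set s : ℕ → ℝ := fun i => t * σ i ^ 2 / r with hs
  set g : ℕ → ℝ → ℂ := fun i x => Complex.exp (((s i * (x ^ 2 - 1) : ℝ) : ℂ) * Complex.I)
    with hg
  have hSig : 0 < SigN σ N := by
    apply Finset.sum_pos (fun i _ => pow_pos (hσ i) 4)
    exact ⟨1, by simp only [Finset.mem_Icc]; omega⟩
  have hrpos : 0 < r := Real.sqrt_pos.2 (by positivity)
  have hgmeas : ∀ i, Measurable (g i) := by
    intro i
    apply Complex.measurable_exp.comp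
    apply Measurable.mul_const _ Complex.I
    apply Complex.measurable_ofReal.comp
    exact (measurable_const.mul ((measurable_id.pow_const 2).sub measurable_const))
  have hgnorm : ∀ i x, ‖g i x‖ = 1 := fun i x => Complex.norm_exp_ofReal_mul_I _
  set Y : ℕ → Ω → ℂ := fun i ω => g i (ξ' i ω) with hY
  have hYmeas : ∀ i, Measurable (Y i) := fun i => (hgmeas i).comp (hmeas' i)
  have hYnorm : ∀ i ω, ‖Y i ω‖ ≤ 1 := fun i ω => le_of_eq (hgnorm i _)
  have hYindep : iIndepFun Y P := hindep'.comp g hgmeas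
  -- rewrite the integrand
  have hinteq : ∫ ω, Complex.exp (Complex.I * (t : ℂ) *
      ((eta σ ξ N ω / r : ℝ) : ℂ)) ∂P = ∫ ω, ∏ i ∈ Finset.Icc 1 N, Y i ω ∂P := by
    apply integral_congr_ae
    have hall : ∀ᵐ ω ∂P, ∀ i, ξ i ω = ξ' i ω := ae_all_iff.2 heq
    filter_upwards [hall] with ω hω
    have heta : eta σ ξ N ω = eta σ ξ' N ω := by
      apply Finset.sum_congr rfl
      intro i _
      rw [hω i]
    rw [heta]
    have hsum : t * (eta σ ξ' N ω / r) = ∑ i ∈ Finset.Icc 1 N, s i * ((ξ' i ω) ^ 2 - 1) := by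
      rw [eta, Finset.sum_div, Finset.mul_sum]
      apply Finset.sum_congr rfl
      intro i _
      rw [hs]
      ring
    have : Complex.I * (t : ℂ) * ((eta σ ξ' N ω / r : ℝ) : ℂ)
        = ((t * (eta σ ξ' N ω / r) : ℝ) : ℂ) * Complex.I := by
      push_cast
      ring
    rw [this, hsum, Complex.ofReal_sum, Finset.sum_mul, Complex.exp_sum]
  rw [hinteq, iIndep_integral_prod Y hYmeas hYnorm hYindep, norm_prod]
  have hfact : ∀ i, ‖∫ ω, Y i ω ∂P‖ = (1 + 4 * (s i) ^ 2) ^ (-(1/4) : ℝ) := by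
    intro i
    have : ∫ ω, Y i ω ∂P = ∫ x, g i x ∂(gaussianReal 0 1) := by
      rw [← hmap' i, integral_map (hmeas' i).aemeasurable
        ((hgmeas i).aestronglyMeasurable)]
    rw [this]
    exact gauss_norm (s i)
  calc ∏ i ∈ Finset.Icc 1 N, ‖∫ ω, Y i ω ∂P‖
      = ∏ i ∈ Finset.Icc 1 N, (1 + 4 * (s i) ^ 2) ^ (-(1/4) : ℝ) :=
        Finset.prod_congr rfl fun i _ => hfact i
    _ ≤ (1 + C1 ^ 2 * t ^ 2 / (N : ℝ)) ^ (-(N : ℝ) / 8) :=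
        final_bound C1 t hC1 σ hσ hpoly N hN

end
end
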